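/- arXiv:math/0405434 — 5 statements merged into one kernel-verified Lean document; each statement's English description precedes it below -/
import Mathlib

section
/- For compositions β and γ, the ribbon Schur functions satisfy r_β = r_γ if and only if M(β) = M(γ). -/
/-- The size `|β|` of a composition, i.e. the sum of its components. -/
def size (l : List ℕ+) : ℕ := (l.map fun x => (x : ℕ)).sum

/-- Near concatenation `α ⊙ β` of two (nonempty) compositions. -/
def odot (a b : List ℕ+) : List ℕ+ :=
  if a = [] then b
  else if b = [] then a
  else a.dropLast ++ (a.getLastI + b.headI) :: b.tail

/-- `β^{⊙ m}`, the `m`-fold near concatenation of `β` with itself. -/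
def odotPow (b : List ℕ+) : ℕ → List ℕ+
  | 0 => []
  | n + 1 => odot (odotPow b n) b

/-- The composition operation `α ∘ β = β^{⊙α₁} · β^{⊙α₂} ⋯ β^{⊙αₖ}`. -/
def compOp (a b : List ℕ+) : List ℕ+ := (a.map fun ai => odotPow b (ai : ℕ)).flatten

/-- `β₁ ∘ β₂ ∘ ⋯ ∘ βₖ` (the composition `1` is a two-sided identity for `∘`). -/
def compFold (l : List (List ℕ+)) : List ℕ+ := l.foldr compOp [1]

/-- The list of all coarsenings of a composition. -/
def coarsenings : List ℕ+ → List (List ℕ+)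
  | [] => [[]]
  | [a] => [[a]]
  | a :: b :: t => ((coarsenings (b :: t)).map (a :: ·)) ++ coarsenings ((a + b) :: t)
  termination_by l => l.length

/-- The multiset `M(β)` of partitions (as multisets of parts) of all coarsenings of `β`. -/
def Mset (b : List ℕ+) : Multiset (Multiset ℕ+) :=
  ↑((coarsenings b).map fun l => (l : Multiset ℕ+))

/-- `h_λ`: the product of the complete homogeneous symmetric functions indexed by the
parts of `λ`.  Since the `h_j` are algebraically independent generators of `Λ` over `ℚ`,
we identify `Λ` with the polynomial ring `ℚ[h₁, h₂, …] = MvPolynomial ℕ+ ℚ`. -/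
noncomputable def hPoly (lam : Multiset ℕ+) : MvPolynomial ℕ+ ℚ :=
  (lam.map MvPolynomial.X).prod

/-- The ribbon Schur function `r_α = (−1)^{l(α)} Σ_{β ≥ α} (−1)^{l(β)} h_{λ(β)}`. -/
noncomputable def ribbon (a : List ℕ+) : MvPolynomial ℕ+ ℚ :=
  (-1 : MvPolynomial ℕ+ ℚ) ^ a.length *
    ((coarsenings a).map fun (b : List ℕ+) =>
      (-1 : MvPolynomial ℕ+ ℚ) ^ b.length * hPoly (b : Multiset ℕ+)).sum

open MvPolynomial

/-- A composition is a coarsening of itself. -/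
lemma mem_coarsenings_self : ∀ l : List ℕ+, l ∈ coarsenings l
  | [] => by simp [coarsenings]
  | [a] => by simp [coarsenings]
  | a :: b :: t => by
    rw [coarsenings]
    exact List.mem_append_left _ (List.mem_map_of_mem (mem_coarsenings_self (b :: t)))
  termination_by l => l.length

/-- Coarsenings are no longer than the original composition. -/
lemma length_le_of_mem_coarsenings : ∀ l : List ℕ+, ∀ c ∈ coarsenings l, c.length ≤ l.length
  | [] => by simp [coarsenings]
  | [a] => by simp [coarsenings]
  | a :: b :: t => by
    intro c hc
    rw [coarsenings] at hc
    rcases List.mem_append.1 hc with h | h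
    · obtain ⟨d, hd, rfl⟩ := List.mem_map.1 h
      have := length_le_of_mem_coarsenings (b :: t) d hd
      simpa using Nat.succ_le_succ this
    · have := length_le_of_mem_coarsenings ((a + b) :: t) c h
      simp only [List.length_cons] at this ⊢
      omega
  termination_by l => l.length

lemma listconv (L : List (List ℕ+)) :
    (List.map (fun l : Multiset ℕ+ => l) (L >>= fun a => pure (↑a : Multiset ℕ+)))
      = L.map fun l : List ℕ+ => (↑l : Multiset ℕ+) := by
  induction L with
  | nil => rfl
  | cons x t ih => simp_all [List.flatMap_cons]

lemma Mset_eq (β : List ℕ+) :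
    Mset β = ↑((coarsenings β).map fun l : List ℕ+ => (↑l : Multiset ℕ+)) := by
  unfold Mset
  rw [listconv]

lemma hPoly_eq (lam : Multiset ℕ+) :
    hPoly lam = monomial (Multiset.toFinsupp lam) (1 : ℚ) := by
  induction lam using Multiset.induction_on with
  | empty => simp [hPoly]
  | cons a s ih =>
    have h1 : hPoly (a ::ₘ s) = X a * hPoly s := by
      simp [hPoly, Multiset.map_cons, Multiset.prod_cons]
    have h2 : Multiset.toFinsupp (a ::ₘ s) = Finsupp.single a 1 + Multiset.toFinsupp s := by
      have : (a ::ₘ s) = {a} + s := by simp [Multiset.singleton_add]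
      rw [this, map_add, Multiset.toFinsupp_singleton]
    rw [h1, ih, h2, X, monomial_mul, one_mul]

lemma coeff_list_sum (e : ℕ+ →₀ ℕ) (l : List (MvPolynomial ℕ+ ℚ)) :
    coeff e l.sum = (l.map (coeff e)).sum := by
  induction l with
  | nil => simp
  | cons x t ih => simp [coeff_add, ih]

lemma list_sum_ite (l : List (Multiset ℕ+)) (a : Multiset ℕ+) (c : ℚ) :
    (l.map fun x => if x = a then c else 0).sum = (Multiset.count a (↑l : Multiset (Multiset ℕ+))) * c := by
  induction l with
  | nil => simp
  | cons x t ih =>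
    rw [List.map_cons, List.sum_cons, ih, ← Multiset.cons_coe, Multiset.count_cons]
    by_cases h : x = a
    · subst h
      simp only [if_pos rfl]
      push_cast
      ring
    · have h' : ¬ a = x := fun hh => h hh.symm
      simp [h, h']

lemma neg_one_pow_C (n : ℕ) : ((-1 : MvPolynomial ℕ+ ℚ)) ^ n = C ((-1 : ℚ) ^ n) := by
  simp [map_pow]

lemma coeff_ribbon (β : List ℕ+) (μ : Multiset ℕ+) :
    coeff (Multiset.toFinsupp μ) (ribbon β)
      = (-1 : ℚ) ^ β.length * (-1 : ℚ) ^ (Multiset.card μ) * (Multiset.count μ (Mset β)) := by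
  rw [ribbon, neg_one_pow_C, coeff_C_mul, coeff_list_sum, List.map_map]
  have hmap : ((coarsenings β).map
      ((coeff (Multiset.toFinsupp μ)) ∘ fun b : List ℕ+ =>
        (-1 : MvPolynomial ℕ+ ℚ) ^ b.length * hPoly (↑b : Multiset ℕ+)))
      = ((coarsenings β).map (fun l : List ℕ+ => (↑l : Multiset ℕ+))).map
        (fun x => if x = μ then (-1 : ℚ) ^ (Multiset.card μ) else 0) := by
    rw [List.map_map]
    refine List.map_congr_left fun b _ => ?_
    simp only [Function.comp_apply, neg_one_pow_C, hPoly_eq, coeff_C_mul, coeff_monomial]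
    have hinj : (↑b : Multiset ℕ+).toFinsupp = μ.toFinsupp ↔ (↑b : Multiset ℕ+) = μ :=
      Multiset.toFinsupp.injective.eq_iff
    by_cases h : (↑b : Multiset ℕ+) = μ
    · have hc : b.length = Multiset.card μ := by rw [← h]; simp
      simp [h, hinj, hc]
    · simp [h, hinj]
  rw [hmap, list_sum_ite]
  rw [← Mset_eq]
  ring

/-- `ribbon` only depends on `Mset` and the length. -/
lemma ribbon_eq_sum_Mset (β : List ℕ+) :
    ribbon β = (-1 : MvPolynomial ℕ+ ℚ) ^ β.length *
      ((Mset β).map fun μ =>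
        (-1 : MvPolynomial ℕ+ ℚ) ^ (Multiset.card μ) * hPoly μ).sum := by
  rw [ribbon, Mset_eq]
  congr 1
  rw [Multiset.map_coe, Multiset.sum_coe, List.map_map]
  rfl

lemma mem_Mset_self (β : List ℕ+) : (↑β : Multiset ℕ+) ∈ Mset β := by
  rw [Mset_eq, Multiset.mem_coe]
  exact List.mem_map_of_mem (mem_coarsenings_self β)

lemma card_le_of_mem_Mset {β : List ℕ+} {μ : Multiset ℕ+} (h : μ ∈ Mset β) :
    Multiset.card μ ≤ β.length := by
  rw [Mset_eq, Multiset.mem_coe] at h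
  obtain ⟨b, hb, rfl⟩ := List.mem_map.1 h
  simpa using length_le_of_mem_coarsenings β b hb

/-- For compositions `β`, `γ`, the ribbon Schur functions satisfy
`r_β = r_γ` iff `M(β) = M(γ)`. -/
theorem ribbon_eq_iff_Mset_eq (β γ : List ℕ+) (hβ : β ≠ []) (hγ : γ ≠ []) :
    ribbon β = ribbon γ ↔ Mset β = Mset γ := by
  constructor
  · intro h
    have key : ∀ μ : Multiset ℕ+,
        (-1 : ℚ) ^ β.length * (-1 : ℚ) ^ (Multiset.card μ) * (Multiset.count μ (Mset β))
          = (-1 : ℚ) ^ γ.length * (-1 : ℚ) ^ (Multiset.card μ) * (Multiset.count μ (Mset γ)) := by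
      intro μ
      rw [← coeff_ribbon, ← coeff_ribbon, h]
    -- lengths are equal
    have hle : ∀ δ ε : List ℕ+,
        (∀ μ : Multiset ℕ+,
          ((-1 : ℚ) ^ δ.length * (-1 : ℚ) ^ (Multiset.card μ) * (Multiset.count μ (Mset δ))
            = (-1 : ℚ) ^ ε.length * (-1 : ℚ) ^ (Multiset.card μ) * (Multiset.count μ (Mset ε)))) →
        ε.length ≤ δ.length := by
      intro δ ε hk
      have hεmem : (↑ε : Multiset ℕ+) ∈ Mset ε := mem_Mset_self ε
      have hpos : (0 : ℚ) < Multiset.count (↑ε : Multiset ℕ+) (Mset ε) := by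
        exact_mod_cast Multiset.count_pos.2 hεmem
      have hrhs : (-1 : ℚ) ^ ε.length * (-1 : ℚ) ^ (Multiset.card (↑ε : Multiset ℕ+)) *
          (Multiset.count (↑ε : Multiset ℕ+) (Mset ε)) ≠ 0 := by
        apply mul_ne_zero (mul_ne_zero (pow_ne_zero _ (by norm_num)) (pow_ne_zero _ (by norm_num)))
        exact ne_of_gt hpos
      have hlhs := hk (↑ε : Multiset ℕ+)
      have hcnt : (Multiset.count (↑ε : Multiset ℕ+) (Mset δ) : ℚ) ≠ 0 := by
        intro h0
        rw [h0, mul_zero] at hlhs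
        exact hrhs hlhs.symm
      have : (↑ε : Multiset ℕ+) ∈ Mset δ := by
        rw [← Multiset.count_pos]
        exact Nat.pos_of_ne_zero fun h0 => hcnt (by rw [h0]; norm_num)
      have := card_le_of_mem_Mset this
      simpa using this
    have h1 := hle β γ key
    have h2 := hle γ β (fun μ => (key μ).symm)
    have hlen : β.length = γ.length := le_antisymm h2 h1
    refine Multiset.ext.2 fun μ => ?_
    have hk := key μ
    rw [hlen] at hk
    have hne : ((-1 : ℚ) ^ γ.length * (-1 : ℚ) ^ (Multiset.card μ)) ≠ 0 :=
      mul_ne_zero (pow_ne_zero _ (by norm_num)) (pow_ne_zero _ (by norm_num))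
    have := mul_left_cancel₀ hne hk
    exact_mod_cast this
  · intro h
    have h1 : γ.length ≤ β.length := by
      have : (↑γ : Multiset ℕ+) ∈ Mset β := h ▸ mem_Mset_self γ
      simpa using card_le_of_mem_Mset this
    have h2 : β.length ≤ γ.length := by
      have : (↑β : Multiset ℕ+) ∈ Mset γ := h ▸ mem_Mset_self β
      simpa using card_le_of_mem_Mset this
    rw [ribbon_eq_sum_Mset, ribbon_eq_sum_Mset, h, le_antisymm h2 h1]
end

section
/- For any compositions α and β, the ribbon Schur functions satisfy the multiplication rule r_α · r_β = r_{α·β} + r_{α⊙β}, where α·β is the concatenation and α⊙β is the near concatenation of α and β. -/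
/-! Splitting the coarsenings of `a·γ` according to whether they merge `a` with the first part
of `γ` gives the recursion `r_{a·γ} = h_a r_γ − r_{a⊙γ}`, which is the theorem for `α = a`.
For longer `α = a·c·s`, apply this recursion to `α`, `α·β` and `α⊙β`; since
`((a+c)·s) ⊙ β = a ⊙ ((c·s) ⊙ β)`, the theorem for `c·s` and `(a+c)·s` closes the induction. -/

open MvPolynomial

lemma hPoly_cons (a : ℕ+) (l : List ℕ+) : hPoly ↑(a :: l) = X a * hPoly ↑l := by
  simp [hPoly]

lemma odot_singleton_cons (a c : ℕ+) (s : List ℕ+) : odot [a] (c :: s) = (a + c) :: s := by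
  simp [odot, List.getLastI]

lemma odot_cons_cons (a c : ℕ+) (s β : List ℕ+) : odot (a :: c :: s) β = a :: odot (c :: s) β := by
  cases β <;> simp [odot, List.getLastI_eq_getLast?_getD, List.getLast?]

lemma odot_cons_ne_nil (a : ℕ+) (s β : List ℕ+) : odot (a :: s) β ≠ [] := by
  unfold odot; split_ifs <;> simp_all

lemma odot_add_cons (a c : ℕ+) (s β : List ℕ+) :
    odot ((a + c) :: s) β = odot [a] (odot (c :: s) β) := by
  cases s with
  | nil => cases β <;> simp [odot, List.getLastI, add_assoc]
  | cons d s => rw [odot_cons_cons, odot_cons_cons, odot_singleton_cons]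

lemma ribbon_singleton (a : ℕ+) : ribbon [a] = X a := by
  simp [ribbon, coarsenings, hPoly]

lemma ribbon_cons_cons (a c : ℕ+) (s : List ℕ+) :
    ribbon (a :: c :: s) = X a * ribbon (c :: s) - ribbon ((a + c) :: s) := by
  have hterm : ∀ b : List ℕ+, (-1 : MvPolynomial ℕ+ ℚ) ^ (a :: b).length * hPoly ↑(a :: b) =
      -X a * ((-1) ^ b.length * hPoly ↑b) := by
    intro b
    rw [hPoly_cons, List.length_cons, pow_succ]
    ring
  rw [ribbon, coarsenings, List.map_append, List.sum_append, List.map_map]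
  simp only [Function.comp_def, hterm]
  rw [List.sum_map_mul_left]
  simp only [ribbon, List.length_cons, pow_succ]
  ring

lemma ribbon_cons (a : ℕ+) {γ : List ℕ+} (hγ : γ ≠ []) :
    ribbon (a :: γ) = X a * ribbon γ - ribbon (odot [a] γ) := by
  obtain ⟨c, s, rfl⟩ := List.exists_cons_of_ne_nil hγ
  rw [ribbon_cons_cons, odot_singleton_cons]

/-- For compositions `α`, `β`:
`r_α · r_β = r_{α·β} + r_{α⊙β}`, where `α·β` is concatenation and `α⊙β` near
concatenation. -/
theorem ribbon_mul (α β : List ℕ+) (hα : α ≠ []) (hβ : β ≠ []) :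
    ribbon α * ribbon β = ribbon (α ++ β) + ribbon (odot α β) := by
  obtain ⟨c, s, rfl⟩ := List.exists_cons_of_ne_nil hα
  clear hα
  induction s generalizing c with
  | nil =>
    rw [ribbon_singleton, List.singleton_append, ribbon_cons c hβ]
    ring
  | cons d s ih =>
    simp only [List.cons_append] at ih
    rw [ribbon_cons_cons, List.cons_append, List.cons_append, ribbon_cons_cons, odot_cons_cons,
      ribbon_cons c (odot_cons_ne_nil d s β), ← odot_add_cons]
    linear_combination X c * ih d - ih (c + d)
end

section
/- For any composition β ⊨ n and any m ≥ 1, the m-th power of the ribbon Schur function of β satisfies r_β^m = Σ_{α ⊨ m} r_{α∘β}, where the sum is over all compositions α of m; in particular (taking β = (1)) one has r_{(1)}^m = Σ_{α ⊨ m} r_α. -/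
/-- The list of components of a Mathlib `Composition m`, as positive integers. -/
def Composition.toL {m : ℕ} (c : Composition m) : List ℕ+ :=
  c.blocks.pmap (fun x hx => (⟨x, hx⟩ : ℕ+)) fun _ hx => c.blocks_pos hx

-- auxiliary
noncomputable def HH (l : List ℕ+) : MvPolynomial ℕ+ ℚ :=
  ((coarsenings l).map fun (b : List ℕ+) =>
      (-1 : MvPolynomial ℕ+ ℚ) ^ b.length * hPoly (b : Multiset ℕ+)).sum

lemma ribbon_eq (a : List ℕ+) : ribbon a = (-1)^a.length * HH a := rfl

lemma hPoly_cons_s4 (x : ℕ+) (l : List ℕ+) :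
    hPoly ((x::l : List ℕ+) : Multiset ℕ+) = MvPolynomial.X x * hPoly ↑l := by
  simp [hPoly]

lemma HH_single (x : ℕ+) : HH [x] = - MvPolynomial.X x := by
  simp [HH, coarsenings, hPoly]

lemma HH_cons (x y : ℕ+) (t : List ℕ+) :
    HH (x :: y :: t) = -MvPolynomial.X x * HH (y :: t) + HH ((x+y) :: t) := by
  rw [HH, coarsenings]
  rw [List.map_append, List.sum_append, List.map_map]
  congr 1
  · rw [HH, ← List.sum_map_mul_left]
    congr 1
    apply List.map_congr_left
    intro b _
    simp only [Function.comp_apply, List.length_cons, hPoly_cons_s4, pow_succ]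
    ring

lemma odot_ne_nil (a b : List ℕ+) (hb : b ≠ []) : odot a b ≠ [] := by
  unfold odot
  split_ifs <;> simp_all

lemma odot_cons_single (x y : ℕ+) (t : List ℕ+) : odot [x] (y::t) = (x+y)::t := by
  simp [odot, List.getLastI]

lemma odot_cons (x : ℕ+) (l b : List ℕ+) (hl : l ≠ []) (hb : b ≠ []) :
    odot (x::l) b = x :: odot l b := by
  obtain ⟨z, s, rfl⟩ := List.exists_cons_of_ne_nil hl
  unfold odot
  rw [if_neg (by simp), if_neg hb, if_neg (by simp), if_neg hb]
  simp [List.getLastI_eq_getLast?, List.getLast?_cons_cons]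

lemma odot_head (x y : ℕ+) (t b : List ℕ+) (hb : b ≠ []) :
    odot ((x+y)::t) b = (x + (odot (y::t) b).headI) :: (odot (y::t) b).tail := by
  obtain ⟨w, b', rfl⟩ := List.exists_cons_of_ne_nil hb
  cases t with
  | nil => simp [odot_cons_single, add_assoc]
  | cons z s =>
      rw [odot_cons (x+y) (z::s) _ (by simp) hb, odot_cons y (z::s) _ (by simp) hb]
      simp

lemma HH_mul : ∀ (n : ℕ) (a b : List ℕ+), a.length ≤ n → a ≠ [] → b ≠ [] →
    HH (a ++ b) = HH a * HH b + HH (odot a b) := by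
  intro n
  induction n with
  | zero => intro a b h ha hb; cases a <;> simp_all
  | succ n ih =>
    intro a b hlen ha hb
    obtain ⟨x, a', rfl⟩ := List.exists_cons_of_ne_nil ha
    obtain ⟨y', t', rfl⟩ := List.exists_cons_of_ne_nil hb
    cases a' with
    | nil =>
        rw [List.singleton_append, HH_cons, odot_cons_single, HH_single]
    | cons y t =>
        have hlen' : (y::t).length ≤ n := by simpa using hlen
        have ih1 := ih (y::t) (y'::t') hlen' (by simp) (by simp)
        have ih2 := ih ((x+y)::t) (y'::t') (by simpa using hlen) (by simp) (by simp)
        have e1 : (x::y::t) ++ (y'::t') = x :: y :: (t ++ (y'::t')) := by simp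
        have e2 : y :: (t ++ (y'::t')) = (y::t) ++ (y'::t') := by simp
        have e3 : (x+y) :: (t ++ (y'::t')) = ((x+y)::t) ++ (y'::t') := by simp
        obtain ⟨z, s, hz⟩ := List.exists_cons_of_ne_nil (odot_ne_nil (y::t) (y'::t') (by simp))
        have hxz : odot ((x+y)::t) (y'::t') = (x+z)::s := by
          rw [odot_head x y t (y'::t') (by simp), hz]
          simp
        rw [e1, HH_cons, e2, e3, ih1, ih2,
          HH_cons x y t, odot_cons x (y::t) _ (by simp) (by simp), hz, HH_cons x z s,
          ← hxz]
        ring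

lemma ribbon_mul_s4 (a b : List ℕ+) (ha : a ≠ []) (hb : b ≠ []) :
    ribbon a * ribbon b = ribbon (a ++ b) + ribbon (odot a b) := by
  obtain ⟨x, a', rfl⟩ := List.exists_cons_of_ne_nil ha
  obtain ⟨y, b', rfl⟩ := List.exists_cons_of_ne_nil hb
  have hodot : (odot (x::a') (y::b')).length = a'.length + b'.length + 1 := by
    unfold odot
    rw [if_neg (by simp), if_neg (by simp)]
    simp
    omega
  rw [ribbon_eq, ribbon_eq, ribbon_eq, ribbon_eq, hodot,
      HH_mul (a'.length+1) _ _ (by simp) (by simp) (by simp)]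
  simp only [List.length_append, List.length_cons, pow_add, pow_succ]
  ring

lemma odotPow_ne_nil (b : List ℕ+) (hb : b ≠ []) (n : ℕ) (hn : 1 ≤ n) : odotPow b n ≠ [] := by
  cases n with
  | zero => omega
  | succ k => exact odot_ne_nil _ _ hb

lemma odot_append (x y b : List ℕ+) (hy : y ≠ []) (hb : b ≠ []) :
    odot (x ++ y) b = x ++ odot y b := by
  unfold odot
  rw [if_neg (by simp [hy]), if_neg hb, if_neg hy, if_neg hb]
  rw [List.dropLast_append_of_ne_nil hy,
      List.getLastI_eq_getLast?, List.getLastI_eq_getLast?,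
      List.getLast?_append_of_ne_nil _ hy]
  simp

lemma compOp_cons (x : ℕ+) (r b : List ℕ+) :
    compOp (x :: r) b = odotPow b (x : ℕ) ++ compOp r b := by
  simp [compOp]

lemma compOp_ne_nil (a b : List ℕ+) (ha : a ≠ []) (hb : b ≠ []) : compOp a b ≠ [] := by
  obtain ⟨x, r, rfl⟩ := List.exists_cons_of_ne_nil ha
  rw [compOp_cons]
  intro h
  exact odotPow_ne_nil b hb x x.one_le (List.append_eq_nil_iff.mp h).1

lemma compOp_concat_one (a b : List ℕ+) :
    compOp (a ++ [1]) b = compOp a b ++ b := by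
  simp [compOp, odotPow, odot]

lemma compOp_incLast (a b : List ℕ+) (ha : a ≠ []) (hb : b ≠ []) :
    compOp (a.dropLast ++ [a.getLastI + 1]) b = odot (compOp a b) b := by
  obtain ⟨r, w, rfl⟩ : ∃ r w, a = r ++ [w] := ⟨a.dropLast, a.getLast ha, (List.dropLast_append_getLast ha).symm⟩
  rw [List.dropLast_concat]
  have hgl : (r ++ [w]).getLastI = w := by
    simp [List.getLastI_eq_getLast?]
  rw [hgl]
  have key : ∀ (v : ℕ+), compOp (r ++ [v]) b
      = (r.map fun ai => odotPow b (ai:ℕ)).flatten ++ odotPow b (v:ℕ) := by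
    intro v; simp [compOp]
  rw [key, key, show ((w+1 : ℕ+):ℕ) = (w:ℕ)+1 from rfl,
     show odotPow b ((w:ℕ)+1) = odot (odotPow b (w:ℕ)) b from rfl,
     odot_append _ _ _ (odotPow_ne_nil b hb w w.one_le) hb]

lemma coe_list_inj : Function.Injective (List.map (fun x : ℕ+ => (x : ℕ))) :=
  List.map_injective_iff.mpr PNat.coe_injective

lemma toL_coe {m : ℕ} (c : Composition m) :
    (Composition.toL c).map (fun x : ℕ+ => (x : ℕ)) = c.blocks := by
  unfold Composition.toL
  erw [List.map_pmap]
  exact List.pmap_eq_map _ ▸ List.map_id _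

lemma getLastI_concat_nat (l : List ℕ) (a : ℕ) : (l ++ [a]).getLastI = a := by
  rw [List.getLastI_eq_getLast?, List.getLast?_concat, Option.getD_some]

lemma getLastI_concat_pnat (l : List ℕ+) (a : ℕ+) : (l ++ [a]).getLastI = a := by
  rw [List.getLastI_eq_getLast?, List.getLast?_concat, Option.getD_some]

lemma sum_dropLast_nat {l : List ℕ} (h : l ≠ []) :
    l.dropLast.sum + l.getLastI = l.sum := by
  conv_rhs => rw [← List.dropLast_append_getLast h]
  rw [List.sum_append, List.getLastI_eq_getLast?, List.getLast?_eq_getLast h]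
  simp

lemma dropLast_append_getLastI {α} [Inhabited α] {l : List α} (h : l ≠ []) :
    l.dropLast ++ [l.getLastI] = l := by
  rw [List.getLastI_eq_getLast?, List.getLast?_eq_getLast h, Option.getD_some]
  exact List.dropLast_append_getLast h

lemma getLastI_mem {l : List ℕ} (h : l ≠ []) : l.getLastI ∈ l := by
  rw [List.getLastI_eq_getLast?, List.getLast?_eq_getLast h]
  exact List.getLast_mem h

def upC {m : ℕ} : Composition m ⊕ Composition m → Composition (m+1)
  | .inl c => ⟨c.blocks ++ [1], by
      intro i hi
      rcases List.mem_append.mp hi with h | h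
      · exact c.blocks_pos h
      · simp at h; omega, by simp [c.blocks_sum]⟩
  | .inr c => ⟨c.blocks.dropLast ++ [c.blocks.getLastI + 1], by
      intro i hi
      rcases List.mem_append.mp hi with h | h
      · exact c.blocks_pos (List.dropLast_subset _ h)
      · simp at h; omega, by
      rcases eq_or_ne c.blocks [] with h | h
      · have hs := c.blocks_sum
        rw [h] at hs
        simp [h, List.getLastI, ← hs]
      · rw [List.sum_append, List.sum_singleton, ← add_assoc, sum_dropLast_nat h,
          c.blocks_sum]⟩

lemma blocks_ne_nil {m : ℕ} (hm : 1 ≤ m) (c : Composition m) : c.blocks ≠ [] := by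
  intro h
  have := c.blocks_sum
  rw [h] at this
  simp at this
  omega

lemma upC_bij {m : ℕ} (hm : 1 ≤ m) :
    Function.Bijective (upC : Composition m ⊕ Composition m → Composition (m+1)) := by
  constructor
  · intro x y h
    have hb : (upC x).blocks = (upC y).blocks := by rw [h]
    rcases x with c | c <;> rcases y with d | d <;>
      simp only [upC] at hb
    · have h1 := congrArg List.dropLast hb
      simp only [List.dropLast_concat] at h1
      exact congrArg Sum.inl (Composition.ext h1)
    · exfalso
      have h2 := congrArg List.getLastI hb
      rw [getLastI_concat_nat, getLastI_concat_nat] at h2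
      have := d.blocks_pos (getLastI_mem (blocks_ne_nil hm d))
      omega
    · exfalso
      have h2 := congrArg List.getLastI hb
      rw [getLastI_concat_nat, getLastI_concat_nat] at h2
      have := c.blocks_pos (getLastI_mem (blocks_ne_nil hm c))
      omega
    · have h1 := congrArg List.dropLast hb
      have h2 := congrArg List.getLastI hb
      simp only [List.dropLast_concat] at h1
      rw [getLastI_concat_nat, getLastI_concat_nat] at h2
      refine congrArg Sum.inr (Composition.ext ?_)
      conv_lhs => rw [← dropLast_append_getLastI (blocks_ne_nil hm c)]
      conv_rhs => rw [← dropLast_append_getLastI (blocks_ne_nil hm d)]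
      rw [h1]
      have h3 : c.blocks.getLastI = d.blocks.getLastI := by omega
      rw [h3]
  · intro c'
    have hne : c'.blocks ≠ [] := blocks_ne_nil (by omega) c'
    have hsum : c'.blocks.dropLast.sum + c'.blocks.getLastI = m + 1 := by
      rw [sum_dropLast_nat hne, c'.blocks_sum]
    have hL : 0 < c'.blocks.getLastI := c'.blocks_pos (getLastI_mem hne)
    rcases eq_or_ne c'.blocks.getLastI 1 with h1 | h1
    · refine ⟨Sum.inl ⟨c'.blocks.dropLast, fun hi => c'.blocks_pos (List.dropLast_subset _ hi), by omega⟩, ?_⟩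
      apply Composition.ext
      show c'.blocks.dropLast ++ [1] = c'.blocks
      rw [show ([1] : List ℕ) = [c'.blocks.getLastI] from by rw [h1]]
      exact dropLast_append_getLastI hne
    · refine ⟨Sum.inr ⟨c'.blocks.dropLast ++ [c'.blocks.getLastI - 1], ?_, ?_⟩, ?_⟩
      · intro i hi
        rcases List.mem_append.mp hi with h | h
        · exact c'.blocks_pos (List.dropLast_subset _ h)
        · simp at h; omega
      · rw [List.sum_append, List.sum_singleton]; omega
      · apply Composition.ext
        show (c'.blocks.dropLast ++ [c'.blocks.getLastI - 1]).dropLast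
            ++ [(c'.blocks.dropLast ++ [c'.blocks.getLastI - 1]).getLastI + 1] = c'.blocks
        rw [List.dropLast_concat, getLastI_concat_nat]
        have : c'.blocks.getLastI - 1 + 1 = c'.blocks.getLastI := by omega
        rw [this]
        exact dropLast_append_getLastI hne

lemma toL_ne_nil {m : ℕ} (hm : 1 ≤ m) (c : Composition m) : Composition.toL c ≠ [] := by
  intro h
  have h2 := toL_coe c
  rw [h] at h2
  exact blocks_ne_nil hm c h2.symm

lemma getLastI_map_coe (l : List ℕ+) (h : l ≠ []) :
    (l.map fun x : ℕ+ => (x:ℕ)).getLastI = (l.getLastI : ℕ) := by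
  obtain ⟨r, w, rfl⟩ : ∃ r w, l = r ++ [w] :=
    ⟨l.dropLast, l.getLast h, (List.dropLast_append_getLast h).symm⟩
  rw [getLastI_concat_pnat, List.map_append, List.map_singleton, getLastI_concat_nat]

lemma toL_up_inl {m : ℕ} (c : Composition m) :
    (upC (Sum.inl c)).toL = c.toL ++ [1] := by
  apply coe_list_inj
  rw [toL_coe, List.map_append, toL_coe]
  rfl

lemma toL_up_inr {m : ℕ} (hm : 1 ≤ m) (c : Composition m) :
    (upC (Sum.inr c)).toL = (c.toL).dropLast ++ [(c.toL).getLastI + 1] := by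
  apply coe_list_inj
  rw [toL_coe, List.map_append, List.map_dropLast, toL_coe, List.map_singleton]
  show c.blocks.dropLast ++ [c.blocks.getLastI + 1] = _
  congr 2
  have h1 : ((c.toL.getLastI + 1 : ℕ+) : ℕ) = (c.toL.getLastI : ℕ) + 1 := rfl
  rw [h1, ← getLastI_map_coe _ (toL_ne_nil hm c), toL_coe]

lemma odotPow_one_coe (n : ℕ) :
    (odotPow ([1] : List ℕ+) n).map (fun x : ℕ+ => (x:ℕ)) = if n = 0 then [] else [n] := by
  induction n with
  | zero => rfl
  | succ k ih =>
    rcases Nat.eq_zero_or_pos k with rfl | hk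
    · rfl
    · have hne : odotPow [1] k ≠ [] := odotPow_ne_nil _ (by simp) k hk
      obtain ⟨z, t, hz⟩ := List.exists_cons_of_ne_nil hne
      rw [hz, if_neg (by omega)] at ih
      simp only [List.map_cons] at ih
      have ht : t = [] := by
        cases t
        · rfl
        · simp at ih
      have hzk : (z : ℕ) = k := by
        rw [ht] at ih
        simpa using ih
      show (odot (odotPow [1] k) [1]).map _ = _
      rw [hz, ht, odot_cons_single, if_neg (by omega)]
      simp [hzk]

lemma compOp_one_right (a : List ℕ+) : compOp a [1] = a := by
  induction a with
  | nil => rfl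
  | cons x t ih =>
    rw [compOp_cons, ih]
    have : odotPow ([1] : List ℕ+) (x:ℕ) = [x] := by
      apply coe_list_inj
      rw [odotPow_one_coe, if_neg x.ne_zero]
      rfl
    rw [this]
    rfl

lemma blocks_comp_one (c : Composition 1) : c.blocks = [1] := by
  have hs := c.blocks_sum
  rcases hb : c.blocks with _ | ⟨x, t⟩
  · rw [hb] at hs; simp at hs
  · rw [hb] at hs
    have hx : 0 < x := c.blocks_pos (hb ▸ List.mem_cons_self)
    cases t with
    | nil =>
        simp only [List.sum_cons, List.sum_nil] at hs
        have : x = 1 := by omega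
        rw [this]
    | cons y s =>
        exfalso
        have hy : 0 < y := c.blocks_pos (hb ▸ by simp)
        simp only [List.sum_cons] at hs
        omega

lemma toL_comp_one (c : Composition 1) : Composition.toL c = [1] := by
  apply coe_list_inj
  rw [toL_coe, blocks_comp_one]
  rfl

/-- For any composition `β ⊨ n` and `m ≥ 1`,
`r_β^m = Σ_{α ⊨ m} r_{α∘β}` (sum over all compositions `α` of `m`);
in particular, taking `β = (1)`, one has `r_{(1)}^m = Σ_{α ⊨ m} r_α`. -/
theorem ribbon_pow_eq_sum_comp (β : List ℕ+) (hβ : β ≠ []) (m : ℕ) (hm : 1 ≤ m) :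
    (ribbon β ^ m = ∑ c : Composition m, ribbon (compOp (Composition.toL c) β)) ∧
    (ribbon [1] ^ m = ∑ c : Composition m, ribbon (Composition.toL c)) := by
  have main : ∀ (γ : List ℕ+), γ ≠ [] → ∀ m, 1 ≤ m →
      ribbon γ ^ m = ∑ c : Composition m, ribbon (compOp (Composition.toL c) γ) := by
    intro γ hγ m hm
    induction m, hm using Nat.le_induction with
    | base =>
        rw [pow_one, Finset.sum_congr rfl (fun c _ => by rw [toL_comp_one c]),
          Finset.sum_const, Finset.card_univ]
        have h1 : Fintype.card (Composition 1) = 1 := by rw [composition_card]; rfl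
        rw [h1, one_smul]
        congr 1
        simp [compOp, odotPow, odot]
    | succ k hk ih =>
        rw [pow_succ, ih, Finset.sum_mul]
        have hb := Fintype.sum_bijective upC (upC_bij hk)
          (fun x => ribbon (compOp (Composition.toL (upC x)) γ))
          (fun c => ribbon (compOp (Composition.toL c) γ)) (fun x => rfl)
        rw [← hb, Fintype.sum_sum_type, ← Finset.sum_add_distrib]
        apply Finset.sum_congr rfl
        intro c _
        rw [toL_up_inl, toL_up_inr hk, compOp_concat_one,
          compOp_incLast _ _ (toL_ne_nil hk c) hγ,
          ribbon_mul_s4 _ _ (compOp_ne_nil _ _ (toL_ne_nil hk c) hγ) hγ]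
  refine ⟨main β hβ m hm, ?_⟩
  rw [main [1] (by simp) m hm]
  apply Finset.sum_congr rfl
  intro c _
  rw [compOp_one_right]
end

section
/- Let σ ∈ S_m and τ ∈ S_n be permutations, and let β ⊨ m, γ ⊨ n be compositions with d(σ) = S(β) and d(τ) = S(γ). Then the descent set of the tensor product satisfies d(σ⊗τ) = S(β∘γ). -/
/-- `S(β) ⊆ [n-1]`: the set of proper partial sums of the composition `β`. -/
def Sset (b : List ℕ+) : Finset ℕ :=
  ((List.range (b.length - 1)).map fun j => size (b.take (j + 1))).toFinset

open scoped Classical in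
/-- The descent set `d(σ) = {i ∈ [n-1] : σ(i) > σ(i+1)}` of a permutation of
`{1, …, n}` (realized as `Equiv.Perm (Fin n)` with positions `1,…,n` written
0-indexed as `0,…,n-1`). -/
noncomputable def descents {n : ℕ} (σ : Equiv.Perm (Fin n)) : Finset ℕ :=
  (Finset.Ico 1 n).filter fun i =>
    ∃ h : i < n, σ ⟨i, h⟩ < σ ⟨i - 1, Nat.lt_of_le_of_lt (Nat.sub_le i 1) h⟩

/-- The element of `Fin (m*n)` corresponding (0-indexed) to the pair `(i, j)`;
1-indexed, position `(i-1)n + j`. -/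
def finPair {m n : ℕ} (i : Fin m) (j : Fin n) : Fin (m * n) :=
  ⟨i.1 * n + j.1, by
    calc i.1 * n + j.1 < i.1 * n + n := by have := j.2; omega
    _ = (i.1 + 1) * n := by ring
    _ ≤ m * n := Nat.mul_le_mul_right n i.2⟩

lemma size_nil : size ([] : List ℕ+) = 0 := rfl
lemma size_cons (a : ℕ+) (l : List ℕ+) : size (a :: l) = a + size l := by simp [size]
lemma size_append (a b : List ℕ+) : size (a ++ b) = size a + size b := by simp [size]
lemma size_singleton (a : ℕ+) : size [a] = a := by simp [size]

lemma size_pos {l : List ℕ+} (h : l ≠ []) : 0 < size l := by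
  cases l with
  | nil => exact absurd rfl h
  | cons a t => rw [size_cons]; have := a.pos; omega

lemma size_take_lt {l : List ℕ+} {j k : ℕ} (hjk : j < k) (hk : k ≤ l.length) :
    size (l.take j) < size (l.take k) := by
  have h1 : (l.take k).take j = l.take j := by
    rw [List.take_take]; congr 1; omega
  have h2 : (l.take k).take j ++ (l.take k).drop j = l.take k := List.take_append_drop _ _
  have h3 : (l.take k).drop j ≠ [] := by
    have : ((l.take k).drop j).length = k - j := by
      simp [List.length_take, List.length_drop]; omega
    intro h; rw [h] at this; simp at this; omega
  have := size_pos h3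
  calc size (l.take j) = size ((l.take k).take j) := by rw [h1]
    _ < size ((l.take k).take j) + size ((l.take k).drop j) := by omega
    _ = size (l.take k) := by rw [← size_append, h2]

def IsPsum (l : List ℕ+) (p : ℕ) : Prop := ∃ j, j ≤ l.length ∧ size (l.take j) = p

lemma isPsum_zero (l : List ℕ+) : IsPsum l 0 := ⟨0, Nat.zero_le _, rfl⟩
lemma isPsum_size (l : List ℕ+) : IsPsum l (size l) :=
  ⟨l.length, le_refl _, by rw [List.take_length]⟩

lemma isPsum_le {l : List ℕ+} {p : ℕ} (h : IsPsum l p) : p ≤ size l := by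
  obtain ⟨j, hj, rfl⟩ := h
  rcases eq_or_lt_of_le hj with h | h
  · rw [h, List.take_length]
  · exact le_of_lt (by simpa [List.take_length] using size_take_lt h (le_refl l.length))

lemma mem_Sset_iff (l : List ℕ+) (p : ℕ) :
    p ∈ Sset l ↔ IsPsum l p ∧ 0 < p ∧ p < size l := by
  simp only [Sset, List.mem_toFinset, List.mem_map, List.mem_range]
  constructor
  · rintro ⟨j, hj, rfl⟩
    refine ⟨⟨j + 1, by omega, rfl⟩, ?_, ?_⟩
    · have : size (l.take 0) < size (l.take (j + 1)) := size_take_lt (by omega) (by omega)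
      simpa [size_nil] using this
    · have : size (l.take (j + 1)) < size (l.take l.length) := size_take_lt (by omega) (le_refl _)
      simpa [List.take_length] using this
  · rintro ⟨⟨j, hj, rfl⟩, hp0, hps⟩
    have hj0 : j ≠ 0 := by rintro rfl; simp [size] at hp0
    have hjl : j ≠ l.length := by rintro rfl; rw [List.take_length] at hps; omega
    refine ⟨j - 1, by omega, ?_⟩
    have h1 : j - 1 + 1 = j := by omega
    rw [h1]

lemma isPsum_append (a b : List ℕ+) (p : ℕ) :
    IsPsum (a ++ b) p ↔ IsPsum a p ∨ ∃ q, IsPsum b q ∧ p = size a + q := by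
  constructor
  · rintro ⟨j, hj, rfl⟩
    rw [List.take_append, size_append]
    by_cases h : j ≤ a.length
    · left
      have : j - a.length = 0 := by omega
      rw [this]; simpa using ⟨j, h, rfl⟩
    · right
      refine ⟨size (b.take (j - a.length)), ⟨j - a.length, by simp at hj; omega, rfl⟩, ?_⟩
      rw [List.take_of_length_le (by omega)]
  · rintro (⟨j, hj, rfl⟩ | ⟨q, ⟨j, hj, rfl⟩, rfl⟩)
    · refine ⟨j, by simp only [List.length_append]; omega, ?_⟩
      rw [List.take_append]
      have : j - a.length = 0 := by omega
      rw [this]; simp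
    · refine ⟨a.length + j, by simp only [List.length_append]; omega, ?_⟩
      rw [List.take_append, List.take_of_length_le (by omega), size_append]
      have h2 : a.length + j - a.length = j := by omega
      rw [h2]

lemma isPsum_nil (p : ℕ) : IsPsum [] p ↔ p = 0 := by
  constructor
  · rintro ⟨j, hj, rfl⟩; simp at hj; subst hj; rfl
  · rintro rfl; exact isPsum_zero _

lemma isPsum_singleton (c : ℕ+) (p : ℕ) : IsPsum [c] p ↔ p = 0 ∨ p = c := by
  constructor
  · rintro ⟨j, hj, rfl⟩
    simp at hj
    interval_cases j
    · left; rfl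
    · right; simp [size]
  · rintro (rfl | rfl)
    · exact isPsum_zero _
    · have := isPsum_size [c]; simpa [size] using this

lemma isPsum_cons (c : ℕ+) (t : List ℕ+) (p : ℕ) :
    IsPsum (c :: t) p ↔ p = 0 ∨ ∃ q, IsPsum t q ∧ p = c + q := by
  have : (c :: t) = [c] ++ t := rfl
  rw [this, isPsum_append, isPsum_singleton]
  simp only [size]
  constructor
  · rintro ((rfl | rfl) | ⟨q, hq, rfl⟩)
    · left; rfl
    · right; exact ⟨0, isPsum_zero _, by simp⟩
    · right; exact ⟨q, hq, by simp⟩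
  · rintro (rfl | ⟨q, hq, rfl⟩)
    · left; left; rfl
    · right; exact ⟨q, hq, by simp⟩

lemma odot_nil_left (b : List ℕ+) : odot [] b = b := by simp [odot]

lemma odot_concat_cons (a' : List ℕ+) (x y : ℕ+) (b' : List ℕ+) :
    odot (a' ++ [x]) (y :: b') = a' ++ (x + y) :: b' := by
  rw [odot, if_neg (by simp), if_neg (by simp), List.dropLast_concat,
    List.getLastI_eq_getLast?, List.getLast?_concat]
  rfl

lemma size_odot (a b : List ℕ+) : size (odot a b) = size a + size b := by
  by_cases ha : a = []
  · subst ha; simp [odot, size_nil]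
  by_cases hb : b = []
  · subst hb; simp [odot, ha, size_nil]
  obtain ⟨a', x, rfl⟩ : ∃ a' x, a = a' ++ [x] := by
    rcases List.eq_nil_or_concat a with h | ⟨L, c, h⟩
    · exact absurd h ha
    · exact ⟨L, c, by simpa using h⟩
  obtain ⟨y, b', rfl⟩ := List.exists_cons_of_ne_nil hb
  rw [odot_concat_cons]
  simp [size, PNat.add_coe]
  ring

lemma size_odotPow (g : List ℕ+) (b : ℕ) : size (odotPow g b) = b * size g := by
  induction b with
  | zero => simp [odotPow, size_nil]
  | succ k ih => rw [odotPow, size_odot, ih]; ring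

lemma ne_nil_of_size_pos {l : List ℕ+} (h : 0 < size l) : l ≠ [] := by
  rintro rfl; rw [size_nil] at h; omega

lemma isPsum_odot {a b : List ℕ+} (ha : a ≠ []) (hb : b ≠ []) (p : ℕ) :
    IsPsum (odot a b) p ↔ IsPsum (a ++ b) p ∧ p ≠ size a := by
  obtain ⟨a', x, rfl⟩ : ∃ a' x, a = a' ++ [x] := by
    rcases List.eq_nil_or_concat a with h | ⟨L, c, h⟩
    · exact absurd h ha
    · exact ⟨L, c, by simpa using h⟩
  obtain ⟨y, b', rfl⟩ := List.exists_cons_of_ne_nil hb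
  rw [odot_concat_cons]
  have hx := x.pos
  have hy := y.pos
  have key : ∀ q : ℕ, IsPsum (a' ++ (x + y) :: b') q ↔
      (IsPsum a' q ∨ ∃ r, IsPsum b' r ∧ q = size a' + (x : ℕ) + y + r) := by
    intro q
    rw [isPsum_append]
    constructor
    · rintro (h | ⟨w, hw, rfl⟩)
      · exact Or.inl h
      · rcases (isPsum_cons _ _ _).mp hw with rfl | ⟨r, hr, rfl⟩
        · exact Or.inl (by simpa using isPsum_size a')
        · exact Or.inr ⟨r, hr, by rw [PNat.add_coe]; ring⟩
    · rintro (h | ⟨r, hr, rfl⟩)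
      · exact Or.inl h
      · exact Or.inr ⟨(x : ℕ) + y + r,
          (isPsum_cons _ _ _).mpr (Or.inr ⟨r, hr, by rw [PNat.add_coe]⟩), by ring⟩
  have key2 : IsPsum (a' ++ [x] ++ y :: b') p ↔
      (IsPsum a' p ∨ p = size a' + (x : ℕ) ∨
        ∃ r, IsPsum b' r ∧ p = size a' + (x : ℕ) + y + r) := by
    rw [isPsum_append]
    constructor
    · rintro (h | ⟨w, hw, rfl⟩)
      · rcases (isPsum_append _ _ _).mp h with h' | ⟨w, hw, rfl⟩
        · exact Or.inl h'
        · rcases (isPsum_singleton _ _).mp hw with rfl | rfl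
          · exact Or.inl (by simpa using isPsum_size a')
          · exact Or.inr (Or.inl rfl)
      · rcases (isPsum_cons _ _ _).mp hw with rfl | ⟨r, hr, rfl⟩
        · exact Or.inr (Or.inl (by rw [size_append, size_singleton]; omega))
        · exact Or.inr (Or.inr ⟨r, hr, by rw [size_append, size_singleton]; ring⟩)
    · rintro (h | rfl | ⟨r, hr, rfl⟩)
      · exact Or.inl ((isPsum_append _ _ _).mpr (Or.inl h))
      · exact Or.inl ((isPsum_append _ _ _).mpr
          (Or.inr ⟨x, (isPsum_singleton _ _).mpr (Or.inr rfl), rfl⟩))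
      · exact Or.inr ⟨(y : ℕ) + r, (isPsum_cons _ _ _).mpr (Or.inr ⟨r, hr, rfl⟩),
          by rw [size_append, size_singleton]; ring⟩
  rw [key, key2, size_append, size_singleton]
  constructor
  · rintro (h | ⟨r, hr, rfl⟩)
    · have := isPsum_le h
      exact ⟨Or.inl h, by omega⟩
    · exact ⟨Or.inr (Or.inr ⟨r, hr, rfl⟩), by omega⟩
  · rintro ⟨(h | rfl | ⟨r, hr, rfl⟩), hne⟩
    · exact Or.inl h
    · exact absurd rfl hne
    · exact Or.inr ⟨r, hr, rfl⟩

lemma block_lt {q b s n : ℕ} (hq : q < b) (hs : s < n) : q * n + s < b * n :=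
  calc q * n + s < q * n + n := by omega
    _ = (q + 1) * n := by ring
    _ ≤ b * n := Nat.mul_le_mul_right n hq

lemma isPsum_odotPow (g : List ℕ+) (hg : g ≠ []) (b : ℕ) (hb : 1 ≤ b) (p : ℕ) :
    IsPsum (odotPow g b) p ↔ p = 0 ∨ p = b * size g ∨
      ∃ q, q < b ∧ ∃ s, 0 < s ∧ s < size g ∧ IsPsum g s ∧ p = q * size g + s := by
  set n := size g with hn
  have hn0 : 0 < n := size_pos hg
  induction b with
  | zero => omega
  | succ k ih =>
    rcases Nat.eq_or_lt_of_le hb with h1 | h1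
    · -- k = 0, odotPow g 1 = g
      have hk : k = 0 := by omega
      subst hk
      have : odotPow g 1 = g := by
        show odot (odotPow g 0) g = g
        show odot [] g = g
        exact odot_nil_left g
      rw [this]
      constructor
      · intro h
        have hle := isPsum_le h
        rcases Nat.eq_zero_or_pos p with rfl | hp0
        · exact Or.inl rfl
        rcases Nat.eq_or_lt_of_le hle with h2 | h2
        · exact Or.inr (Or.inl (by omega))
        · exact Or.inr (Or.inr ⟨0, by omega, p, hp0, h2, h, by omega⟩)
      · rintro (rfl | rfl | ⟨q, hq, s, hs0, hsn, hs, rfl⟩)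
        · exact isPsum_zero g
        · simpa using isPsum_size g
        · have : q = 0 := by omega
          subst this; simpa using hs
    · -- k ≥ 1
      have hk : 1 ≤ k := by omega
      have ihk := ih hk
      have hA : odotPow g k ≠ [] := ne_nil_of_size_pos (by rw [size_odotPow]; exact Nat.mul_pos (by omega) (size_pos hg))
      have hstep : odotPow g (k + 1) = odot (odotPow g k) g := rfl
      rw [hstep, isPsum_odot hA hg, isPsum_append, size_odotPow, ← hn]
      simp only [ihk]
      constructor
      · rintro ⟨(h | ⟨r, hr, rfl⟩), hne⟩
        · rcases h with rfl | rfl | ⟨q, hq, s, hs0, hsn, hs, rfl⟩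
          · exact Or.inl rfl
          · exact absurd rfl hne
          · exact Or.inr (Or.inr ⟨q, by omega, s, hs0, hsn, hs, rfl⟩)
        · have hrn : r ≤ n := isPsum_le hr
          rcases Nat.eq_zero_or_pos r with rfl | hr0
          · exact absurd (by rw [Nat.add_zero]) hne
          rcases Nat.eq_or_lt_of_le hrn with h2 | h2
          · exact Or.inr (Or.inl (by subst h2; ring))
          · exact Or.inr (Or.inr ⟨k, by omega, r, hr0, h2, hr, rfl⟩)
      · rintro (rfl | rfl | ⟨q, hq, s, hs0, hsn, hs, rfl⟩)
        · exact ⟨Or.inl (Or.inl rfl), (Nat.mul_pos (by omega) hn0).ne⟩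
        · refine ⟨Or.inr ⟨n, by rw [hn]; exact isPsum_size g, by ring⟩, ?_⟩
          have hlt : k * n < (k + 1) * n := by
            calc k * n < k * n + n := Nat.lt_add_of_pos_right hn0
              _ = (k + 1) * n := by ring
          exact hlt.ne'
        · rcases Nat.lt_or_ge q k with h2 | h2
          · exact ⟨Or.inl (Or.inr (Or.inr ⟨q, h2, s, hs0, hsn, hs, rfl⟩)), (block_lt h2 hsn).ne⟩
          · have hqk : q = k := by omega
            subst hqk
            exact ⟨Or.inr ⟨s, hs, rfl⟩, (Nat.lt_add_of_pos_right hs0).ne'⟩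

lemma compOp_nil (g : List ℕ+) : compOp [] g = [] := rfl
lemma compOp_cons_s5 (a : ℕ+) (t : List ℕ+) (g : List ℕ+) :
    compOp (a :: t) g = odotPow g (a : ℕ) ++ compOp t g := by
  simp [compOp]

lemma size_compOp (b g : List ℕ+) : size (compOp b g) = size b * size g := by
  induction b with
  | nil => simp [compOp_nil, size_nil]
  | cons a t ih =>
    rw [compOp_cons_s5, size_append, size_odotPow, ih, size_cons]
    ring

lemma isPsum_compOp (g : List ℕ+) (hg : g ≠ []) (b : List ℕ+) (p : ℕ) :
    IsPsum (compOp b g) p ↔ (∃ B, IsPsum b B ∧ p = B * size g) ∨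
      ∃ q, q < size b ∧ ∃ s, 0 < s ∧ s < size g ∧ IsPsum g s ∧ p = q * size g + s := by
  induction b generalizing p with
  | nil =>
    rw [compOp_nil, isPsum_nil]
    constructor
    · rintro rfl
      exact Or.inl ⟨0, isPsum_zero _, by ring⟩
    · rintro (⟨B, hB, rfl⟩ | ⟨q, hq, _⟩)
      · have : B = 0 := (isPsum_nil B).mp hB
        subst this; ring
      · rw [size_nil] at hq; omega
  | cons a t ih =>
    rw [compOp_cons_s5, isPsum_append, size_odotPow,
      isPsum_odotPow g hg (a : ℕ) a.pos]
    have ha := a.pos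
    constructor
    · rintro ((rfl | rfl | ⟨q, hq, s, hs0, hsn, hs, rfl⟩) | ⟨r, hr, rfl⟩)
      · exact Or.inl ⟨0, isPsum_zero _, by ring⟩
      · exact Or.inl ⟨(a : ℕ), (isPsum_cons a t _).mpr (Or.inr ⟨0, isPsum_zero _, by omega⟩), rfl⟩
      · refine Or.inr ⟨q, ?_, s, hs0, hsn, hs, rfl⟩
        rw [size_cons]; omega
      · rcases (ih r).mp hr with ⟨B, hB, rfl⟩ | ⟨q, hq, s, hs0, hsn, hs, rfl⟩
        · refine Or.inl ⟨(a : ℕ) + B, (isPsum_cons a t _).mpr (Or.inr ⟨B, hB, rfl⟩), by ring⟩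
        · refine Or.inr ⟨(a : ℕ) + q, ?_, s, hs0, hsn, hs, by ring⟩
          rw [size_cons]; omega
    · rintro (⟨B, hB, rfl⟩ | ⟨q, hq, s, hs0, hsn, hs, rfl⟩)
      · rcases (isPsum_cons a t B).mp hB with rfl | ⟨B', hB', rfl⟩
        · exact Or.inl (Or.inl (by ring))
        · refine Or.inr ⟨B' * size g, (ih _).mpr (Or.inl ⟨B', hB', rfl⟩), by ring⟩
      · rcases Nat.lt_or_ge q (a : ℕ) with h2 | h2
        · exact Or.inl (Or.inr (Or.inr ⟨q, h2, s, hs0, hsn, hs, rfl⟩))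
        · refine Or.inr ⟨(q - (a : ℕ)) * size g + s,
            (ih _).mpr (Or.inr ⟨q - (a : ℕ), by rw [size_cons] at hq; omega, s, hs0, hsn, hs, rfl⟩), ?_⟩
          have : (a : ℕ) * size g + ((q - (a : ℕ)) * size g + s)
              = ((a : ℕ) + (q - (a : ℕ))) * size g + s := by ring
          rw [this]
          congr 2
          omega

lemma mem_descents {k : ℕ} (ρ : Equiv.Perm (Fin k)) (p : ℕ) :
    p ∈ descents ρ ↔ 1 ≤ p ∧ ∃ h : p < k,
      ρ ⟨p, h⟩ < ρ ⟨p - 1, Nat.lt_of_le_of_lt (Nat.sub_le p 1) h⟩ := by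
  classical
  rw [descents, Finset.mem_filter, Finset.mem_Ico]
  constructor
  · rintro ⟨⟨h1, h2⟩, h3⟩
    exact ⟨h1, h3⟩
  · rintro ⟨h1, h, hlt⟩
    exact ⟨⟨h1, h⟩, h, hlt⟩

lemma nat_block_lt {n a a' b b' : ℕ} (hb : b < n) (hb' : b' < n) :
    a * n + b < a' * n + b' ↔ (a < a' ∨ (a = a' ∧ b < b')) := by
  constructor
  · intro h
    rcases lt_trichotomy a a' with h' | h' | h'
    · exact Or.inl h'
    · subst h'; exact Or.inr ⟨rfl, by omega⟩
    · have := block_lt h' hb'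
      omega
  · rintro (h | ⟨rfl, h⟩)
    · have := block_lt h hb
      omega
    · omega

/-- If `σ ∈ S_m`, `τ ∈ S_n`, `d(σ) = S(β)`, `d(τ) = S(γ)`, then the
tensor product `σ ⊗ τ ∈ S_{mn}` (the permutation with
`(σ⊗τ)((i−1)n + j) = (σ(i)−1)n + τ(j)`) has descent set `d(σ⊗τ) = S(β∘γ)`. -/
theorem descents_tensor (m n : ℕ) (σ : Equiv.Perm (Fin m)) (τ : Equiv.Perm (Fin n))
    (β γ : List ℕ+) (hβ : β ≠ []) (hγ : γ ≠ []) (hβm : size β = m) (hγn : size γ = n)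
    (hdσ : descents σ = Sset β) (hdτ : descents τ = Sset γ)
    (π : Equiv.Perm (Fin (m * n)))
    (hπ : ∀ (i : Fin m) (j : Fin n), π (finPair i j) = finPair (σ i) (τ j)) :
    descents π = Sset (compOp β γ) := by
  subst hβm hγn
  have hn0 : 0 < size γ := size_pos hγ
  have hm0 : 0 < size β := size_pos hβ
  ext p
  rw [mem_descents, mem_Sset_iff, isPsum_compOp γ hγ β p, size_compOp]
  by_cases hj0 : p % size γ = 0
  · -- p is a multiple of size γ
    obtain ⟨i, rfl⟩ : ∃ i, p = i * size γ :=
      ⟨p / size γ, (Nat.div_mul_cancel (Nat.dvd_of_mod_eq_zero hj0)).symm⟩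
    have hRHS : ((∃ B', IsPsum β B' ∧ i * size γ = B' * size γ) ∨
        ∃ q, q < size β ∧ ∃ s, 0 < s ∧ s < size γ ∧ IsPsum γ s ∧
          i * size γ = q * size γ + s) ∧
        0 < i * size γ ∧ i * size γ < size β * size γ ↔
        IsPsum β i ∧ 0 < i ∧ i < size β := by
      constructor
      · rintro ⟨(⟨B', hB', hEq⟩ | ⟨q, hq, s, hs0, hsG, hs, hEq⟩), hp0, hpB⟩
        · have hBi : B' = i := Nat.eq_of_mul_eq_mul_right hn0 hEq.symm
          subst hBi
          refine ⟨hB', ?_, ?_⟩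
          · rcases Nat.eq_zero_or_pos B' with h | h
            · exfalso; rw [h, Nat.zero_mul] at hp0; omega
            · exact h
          · by_contra h
            have : size β * size γ ≤ B' * size γ := Nat.mul_le_mul_right _ (by omega)
            omega
        · rcases Nat.lt_or_ge q i with h' | h'
          · have := block_lt h' hsG
            omega
          · have : i * size γ ≤ q * size γ := Nat.mul_le_mul_right _ h'
            omega
      · rintro ⟨h1, h2, h3⟩
        refine ⟨Or.inl ⟨i, h1, rfl⟩, ?_, ?_⟩
        · have : 0 * size γ + 0 < i * size γ := block_lt h2 hn0
          omega
        · have : 0 * size γ + 0 < size β * size γ := block_lt hm0 hn0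
          have := block_lt h3 hn0
          omega
    rw [hRHS, ← mem_Sset_iff, ← hdσ, mem_descents]
    have key : ∀ (hiB : i < size β) (hi1 : 1 ≤ i)
        (hp : i * size γ < size β * size γ),
        (π ⟨i * size γ, hp⟩ <
          π ⟨i * size γ - 1, Nat.lt_of_le_of_lt (Nat.sub_le _ 1) hp⟩) ↔
        σ ⟨i, hiB⟩ < σ ⟨i - 1, Nat.lt_of_le_of_lt (Nat.sub_le i 1) hiB⟩ := by
      intro hiB hi1 hp
      have e1 : (⟨i * size γ, hp⟩ : Fin (size β * size γ)) =
          finPair ⟨i, hiB⟩ ⟨0, hn0⟩ := by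
        apply Fin.ext; simp [finPair]
      have hsub : (i - 1) * size γ + (size γ - 1) = i * size γ - 1 := by
        have h' : (i - 1) * size γ = i * size γ - size γ := by rw [Nat.sub_one_mul]
        have h'' : 1 * size γ ≤ i * size γ := Nat.mul_le_mul_right _ hi1
        omega
      have e2 : (⟨i * size γ - 1, Nat.lt_of_le_of_lt (Nat.sub_le _ 1) hp⟩ :
          Fin (size β * size γ)) =
          finPair ⟨i - 1, by omega⟩ ⟨size γ - 1, by omega⟩ := by
        apply Fin.ext; simp [finPair]; omega
      rw [e1, e2, hπ, hπ, Fin.lt_def, Fin.lt_def]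
      show (σ ⟨i, hiB⟩).1 * size γ + (τ ⟨0, hn0⟩).1 <
          (σ ⟨i - 1, _⟩).1 * size γ + (τ ⟨size γ - 1, _⟩).1 ↔ _
      rw [nat_block_lt (Fin.is_lt _) (Fin.is_lt _)]
      constructor
      · rintro (h | ⟨hEq, _⟩)
        · exact h
        · exfalso
          have h1 : σ ⟨i, hiB⟩ = σ ⟨i - 1, Nat.lt_of_le_of_lt (Nat.sub_le i 1) hiB⟩ :=
            Fin.ext hEq
          have h2 := σ.injective h1
          have h3 : i = i - 1 := congrArg Fin.val h2
          omega
      · intro h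
        exact Or.inl h
    constructor
    · rintro ⟨hp1, hp, hlt⟩
      have hi1 : 1 ≤ i := by
        rcases Nat.eq_zero_or_pos i with rfl | h
        · omega
        · exact h
      have hiB : i < size β := by
        by_contra h
        have : size β * size γ ≤ i * size γ := Nat.mul_le_mul_right _ (by omega)
        omega
      exact ⟨hi1, hiB, (key hiB hi1 hp).mp hlt⟩
    · rintro ⟨hi1, hiB, hlt⟩
      have hp : i * size γ < size β * size γ := by
        have := block_lt hiB hn0
        omega
      have hp1 : 1 ≤ i * size γ := by
        have : 1 * size γ ≤ i * size γ := Nat.mul_le_mul_right _ hi1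
        omega
      exact ⟨hp1, hp, (key hiB hi1 hp).mpr hlt⟩
  · -- p is not a multiple of size γ
    have hij : p / size γ * size γ + p % size γ = p := by
      have := Nat.div_add_mod p (size γ)
      have hc : size γ * (p / size γ) = p / size γ * size γ := Nat.mul_comm _ _
      omega
    have hjG : p % size γ < size γ := Nat.mod_lt _ hn0
    have hj1 : 1 ≤ p % size γ := by omega
    have hRHS : ((∃ B', IsPsum β B' ∧ p = B' * size γ) ∨
        ∃ q, q < size β ∧ ∃ s, 0 < s ∧ s < size γ ∧ IsPsum γ s ∧
          p = q * size γ + s) ∧ 0 < p ∧ p < size β * size γ ↔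
        IsPsum γ (p % size γ) ∧ 0 < p % size γ ∧ p % size γ < size γ ∧
          p / size γ < size β := by
      constructor
      · rintro ⟨(⟨B', hB', hEq⟩ | ⟨q, hq, s, hs0, hsG, hs, hEq⟩), hp0, hpB⟩
        · exfalso
          have : p % size γ = 0 := by rw [hEq, Nat.mul_mod_left]
          omega
        · have hs' : p % size γ = s := by
            rw [hEq]
            have h1 : (q * size γ + s) % size γ = s % size γ := by
              rw [Nat.mul_comm q (size γ)]
              exact Nat.mul_add_mod _ _ _
            rw [h1, Nat.mod_eq_of_lt hsG]
          have hq' : p / size γ = q := by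
            rw [hEq]
            have h1 : (q * size γ + s) / size γ = q + s / size γ := by
              rw [Nat.mul_comm q (size γ)]
              exact Nat.mul_add_div hn0 _ _
            rw [h1, Nat.div_eq_of_lt hsG]
            omega
          rw [hs', hq']
          exact ⟨hs, hs0, hsG, hq⟩
      · rintro ⟨h1, h2, h3, h4⟩
        refine ⟨Or.inr ⟨p / size γ, h4, p % size γ, h2, h3, h1, by omega⟩, by omega, ?_⟩
        have := block_lt h4 h3
        omega
    rw [hRHS]
    have hdiv : ∀ (hp : p < size β * size γ), p / size γ < size β := by
      intro hp
      rw [Nat.div_lt_iff_lt_mul hn0]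
      exact hp
    have key : ∀ (hiB : p / size γ < size β) (hp : p < size β * size γ),
        (π ⟨p, hp⟩ < π ⟨p - 1, Nat.lt_of_le_of_lt (Nat.sub_le _ 1) hp⟩) ↔
        τ ⟨p % size γ, hjG⟩ <
          τ ⟨p % size γ - 1, Nat.lt_of_le_of_lt (Nat.sub_le _ 1) hjG⟩ := by
      intro hiB hp
      have e1 : (⟨p, hp⟩ : Fin (size β * size γ)) =
          finPair ⟨p / size γ, hiB⟩ ⟨p % size γ, hjG⟩ := by
        apply Fin.ext; simp [finPair]; omega
      have e2 : (⟨p - 1, Nat.lt_of_le_of_lt (Nat.sub_le _ 1) hp⟩ :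
          Fin (size β * size γ)) =
          finPair ⟨p / size γ, hiB⟩ ⟨p % size γ - 1, by omega⟩ := by
        apply Fin.ext; simp [finPair]; omega
      rw [e1, e2, hπ, hπ, Fin.lt_def, Fin.lt_def]
      show (σ ⟨p / size γ, hiB⟩).1 * size γ + (τ ⟨p % size γ, hjG⟩).1 <
          (σ ⟨p / size γ, hiB⟩).1 * size γ + (τ ⟨p % size γ - 1, _⟩).1 ↔ _
      rw [nat_block_lt (Fin.is_lt _) (Fin.is_lt _)]
      constructor
      · rintro (h | ⟨_, h⟩)
        · omega
        · exact h
      · intro h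
        exact Or.inr ⟨rfl, h⟩
    have hmemτ : p % size γ ∈ descents τ ↔ IsPsum γ (p % size γ) ∧
        0 < p % size γ ∧ p % size γ < size γ := by
      rw [hdτ, mem_Sset_iff]
    constructor
    · rintro ⟨hp1, hp, hlt⟩
      have hiB := hdiv hp
      have hτ : p % size γ ∈ descents τ := by
        rw [mem_descents]
        exact ⟨hj1, hjG, (key hiB hp).mp hlt⟩
      rw [hmemτ] at hτ
      exact ⟨hτ.1, hτ.2.1, hτ.2.2, hiB⟩
    · rintro ⟨h1, h2, h3, h4⟩
      have hp : p < size β * size γ := by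
        have := block_lt h4 hjG
        omega
      have hτ : p % size γ ∈ descents τ := by
        rw [hmemτ]
        exact ⟨h1, h2, h3⟩
      rw [mem_descents] at hτ
      obtain ⟨_, _, hlt⟩ := hτ
      exact ⟨by omega, hp, (key h4 hp).mpr hlt⟩
end

section
/- Let n ≥ 0 and let h assign a rational number h_S to each subset S ⊆ [n]. Then the following are equivalent: (i) for all subsets T, T' ⊆ [n] such that the complements [n]∖T and [n]∖T' have the same profile partition (equivalently, λ(β(T)) = λ(β(T')) as partitions of n+1), one has Σ_{S ⊆ T} h_S = Σ_{S ⊆ T'} h_S (i.e., the quasisymmetric function Σ_S h_S F_{β(S)} is symmetric); (ii) the multicollection {S^{h_S}} is fully balanced, i.e., for every partition λ of n+1 there is a constant κ_λ such that Σ_{S ⊇ T} h_S = κ_λ for every T ∈ F_λ. -/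
/-- The composition `β(S)` of `n` determined by a subset `S ⊆ [n-1]`:
if `S = {i₁ < ⋯ < iₖ}` then `β(S) = (i₁, i₂−i₁, …, n−iₖ)`. -/
def betaOf (n : ℕ) (S : Finset ℕ) : List ℕ :=
  List.zipWith (fun a b => a - b) (S.sort (· ≤ ·) ++ [n]) (0 :: S.sort (· ≤ ·))

/-- `λ(β(S))`, the partition of `n+1` (as a multiset of parts) determined by a subset
`S ⊆ [n]`. -/
def partOf (n : ℕ) (S : Finset ℕ) : Multiset ℕ := (betaOf (n + 1) S : List ℕ)

namespace Stmt18

open Finset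

/-- Core computation for gap lists. -/
lemma gaps_aux (l : List ℕ) : ∀ p m : ℕ, ((p :: (l ++ [m])).Pairwise (· < ·)) →
    (List.zipWith (fun a b => a - b) (l ++ [m]) (p :: l)).sum = m - p ∧
    (0 ∉ List.zipWith (fun a b => a - b) (l ++ [m]) (p :: l)) ∧ p < m := by
  induction l with
  | nil =>
    intro p m hp
    simp only [List.pairwise_cons, List.mem_singleton] at hp
    have hpm : p < m := hp.1 m (by simp)
    simp only [List.nil_append, List.zipWith_cons_cons, List.zipWith_nil_right,
      List.sum_cons, List.sum_nil, List.mem_singleton]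
    omega
  | cons x l ih =>
    intro p m hp
    rw [List.pairwise_cons] at hp
    have hpx : p < x := hp.1 x (by simp)
    have htail := ih x m (by simpa using hp.2)
    simp only [List.cons_append, List.zipWith_cons_cons, List.sum_cons, List.mem_cons] at *
    refine ⟨by omega, ?_, by omega⟩
    rintro (h0 | h0)
    · omega
    · exact htail.2.1 h0

lemma pairwise_zero_sort (n : ℕ) (S : Finset ℕ) (hS : S ⊆ Finset.Icc 1 n) :
    ((0 : ℕ) :: (S.sort (· ≤ ·) ++ [n + 1])).Pairwise (· < ·) := by
  have hmem : ∀ x ∈ S.sort (· ≤ ·), 1 ≤ x ∧ x ≤ n := by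
    intro x hx
    have := hS (Finset.mem_sort (α := ℕ) (· ≤ ·) |>.mp hx)
    simpa using this
  refine List.pairwise_cons.mpr ⟨?_, ?_⟩
  · intro a ha
    rcases List.mem_append.mp ha with h | h
    · exact lt_of_lt_of_le one_pos (hmem a h).1
    · simp at h; omega
  · refine (List.pairwise_append).mpr ⟨S.sortedLT_sort.pairwise, by simp, ?_⟩
    intro a ha b hb
    simp at hb
    have := hmem a ha
    omega

end Stmt18

namespace Stmt18
open Finset

lemma betaOf_eq (n : ℕ) (S : Finset ℕ) :
    betaOf n S = List.zipWith (fun a b => a - b) (S.sort (· ≤ ·) ++ [n])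
      ((0 : ℕ) :: S.sort (· ≤ ·)) := rfl

lemma partOf_sum {n : ℕ} {S : Finset ℕ} (hS : S ⊆ Finset.Icc 1 n) :
    (partOf n S).sum = n + 1 := by
  have := gaps_aux (S.sort (· ≤ ·)) 0 (n + 1) (pairwise_zero_sort n S hS)
  simpa [partOf, betaOf] using this.1

lemma partOf_zero_not_mem {n : ℕ} {S : Finset ℕ} (hS : S ⊆ Finset.Icc 1 n) :
    (0 : ℕ) ∉ partOf n S := by
  have := gaps_aux (S.sort (· ≤ ·)) 0 (n + 1) (pairwise_zero_sort n S hS)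
  simpa [partOf, betaOf] using this.2.1

lemma partOf_card (n : ℕ) (S : Finset ℕ) :
    Multiset.card (partOf n S) = S.card + 1 := by
  simp [partOf, betaOf, Finset.length_sort]

end Stmt18

namespace Stmt18
open Finset List

def shiftE (c : ℕ) : ℕ ↪ ℕ := ⟨fun x => x + c, add_left_injective c⟩

lemma sort_insert_max (C₀ : Finset ℕ) (c : ℕ) (h : ∀ x ∈ C₀, x < c) :
    (insert c C₀).sort (· ≤ ·) = C₀.sort (· ≤ ·) ++ [c] := by
  have hc : c ∉ C₀ := fun hc => lt_irrefl c (h c hc)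
  refine (fun hp hs₁ hs₂ => List.Perm.eq_of_pairwise' (r := (· ≤ ·)) hs₁ hs₂ hp) ?_ ?_ ?_
  · -- permutation
    apply Multiset.coe_eq_coe.mp
    rw [Finset.sort_eq]
    have : (insert c C₀).val = c ::ₘ C₀.val := by
      rw [Finset.insert_val, Multiset.ndinsert_of_notMem hc]
    rw [this, ← Finset.sort_eq (r := (· ≤ ·)) C₀]
    exact Multiset.coe_eq_coe.mpr (List.perm_append_singleton c _).symm
  · exact Finset.pairwise_sort _ _
  · refine (List.pairwise_append).mpr ⟨Finset.pairwise_sort _ _, by simp, ?_⟩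
    intro a ha b hb
    simp only [List.mem_singleton] at hb
    subst hb
    exact le_of_lt (h a (Finset.mem_sort (α := ℕ) (· ≤ ·) |>.mp ha))

lemma beta_insert_max (m c : ℕ) (C₀ : Finset ℕ) (h : ∀ x ∈ C₀, x < c) :
    betaOf m (insert c C₀) = betaOf c C₀ ++ [m - c] := by
  rw [betaOf_eq, sort_insert_max C₀ c h]
  have hlen : (C₀.sort (· ≤ ·) ++ [c]).length = ((0 : ℕ) :: C₀.sort (· ≤ ·)).length := by simp
  calc List.zipWith (fun a b => a - b) ((C₀.sort (· ≤ ·) ++ [c]) ++ [m])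
        (((0 : ℕ) :: C₀.sort (· ≤ ·)) ++ [c])
      = List.zipWith (fun a b => a - b) (C₀.sort (· ≤ ·) ++ [c]) ((0 : ℕ) :: C₀.sort (· ≤ ·)) ++
        List.zipWith (fun a b => a - b) [m] [c] := List.zipWith_append hlen
    _ = betaOf c C₀ ++ [m - c] := by rfl

lemma sort_split (c : ℕ) (A₁ A₂ : Finset ℕ) (h1 : ∀ x ∈ A₁, x < c) (h2 : ∀ x ∈ A₂, 1 ≤ x) :
    (A₁ ∪ insert c (A₂.map (shiftE c))).sort (· ≤ ·) =
      A₁.sort (· ≤ ·) ++ c :: (A₂.sort (· ≤ ·)).map (fun x => x + c) := by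
  have hcA2 : c ∉ A₂.map (shiftE c) := by
    simp only [Finset.mem_map, shiftE, Function.Embedding.coeFn_mk]
    rintro ⟨y, hy, hyc⟩
    have := h2 y hy; omega
  have hdisj : Disjoint A₁ (insert c (A₂.map (shiftE c))) := by
    rw [Finset.disjoint_left]
    intro a ha
    simp only [Finset.mem_insert, Finset.mem_map, shiftE, Function.Embedding.coeFn_mk]
    have := h1 a ha
    rintro (rfl | ⟨y, hy, hyc⟩)
    · omega
    · have := h2 y hy; omega
  refine (fun hp hs₁ hs₂ => List.Perm.eq_of_pairwise' (r := (· ≤ ·)) hs₁ hs₂ hp) ?_ ?_ ?_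
  · apply Multiset.coe_eq_coe.mp
    rw [Finset.sort_eq, ← Finset.disjUnion_eq_union _ _ hdisj]
    show A₁.val + (insert c (A₂.map (shiftE c))).val = _
    rw [Finset.insert_val, Multiset.ndinsert_of_notMem hcA2, Finset.map_val]
    rw [← Finset.sort_eq (r := (· ≤ ·)) A₁, ← Finset.sort_eq (r := (· ≤ ·)) A₂]
    show (↑(A₁.sort (· ≤ ·)) : Multiset ℕ) + (c ::ₘ Multiset.map (shiftE c) ↑(A₂.sort (· ≤ ·)))
      = _
    simp only [Multiset.map_coe, Multiset.cons_coe, ← Multiset.coe_add]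
    rfl
  · exact Finset.pairwise_sort _ _
  · refine (List.pairwise_append).mpr ⟨Finset.pairwise_sort _ _, ?_, ?_⟩
    · refine List.pairwise_cons.mpr ⟨?_, ?_⟩
      · intro b hb
        simp only [List.mem_map] at hb
        obtain ⟨y, hy, rfl⟩ := hb
        show c ≤ y + c
        omega
      · refine List.Pairwise.map _ (fun a b hab => Nat.add_le_add_right hab c) ?_
        exact Finset.pairwise_sort _ _
    · intro a ha b hb
      have ha' : a < c := h1 a (Finset.mem_sort (α := ℕ) (· ≤ ·) |>.mp ha)
      simp only [List.mem_cons, List.mem_map] at hb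
      rcases hb with rfl | ⟨y, hy, rfl⟩
      · omega
      · show a ≤ y + c
        omega

lemma beta_split (c d : ℕ) (A₁ A₂ : Finset ℕ) (h1 : ∀ x ∈ A₁, x < c) (h2 : ∀ x ∈ A₂, 1 ≤ x) :
    betaOf (c + d) (A₁ ∪ insert c (A₂.map (shiftE c))) = betaOf c A₁ ++ betaOf d A₂ := by
  rw [betaOf_eq, sort_split c A₁ A₂ h1 h2]
  set L₁ := A₁.sort (· ≤ ·)
  set L₂ := A₂.sort (· ≤ ·)
  have e1 : (L₁ ++ c :: L₂.map (fun x => x + c)) ++ [c + d]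
      = (L₁ ++ [c]) ++ ((L₂ ++ [d]).map (fun x => x + c)) := by
    simp [List.append_assoc, Nat.add_comm]
  have e2 : (0 : ℕ) :: (L₁ ++ c :: L₂.map (fun x => x + c))
      = ((0 : ℕ) :: L₁) ++ (((0 : ℕ) :: L₂).map (fun x => x + c)) := by
    simp
  rw [e1, e2, List.zipWith_append (by simp)]
  congr 1
  rw [List.zipWith_map (f := fun a b => a - b) (g := fun x => x + c) (h := fun x => x + c)]
  have : (fun a b : ℕ => (a + c) - (b + c)) = (fun a b : ℕ => a - b) := by
    funext a b; omega
  rw [this]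
  rfl

end Stmt18

namespace Stmt18
open Finset

variable {M : Type*} [AddCommMonoid M]

lemma sum_powerset_union' (D₁ : Finset ℕ) : ∀ (D₂ : Finset ℕ), Disjoint D₁ D₂ →
    ∀ (f : Finset ℕ → M),
    ∑ B ∈ (D₁ ∪ D₂).powerset, f B = ∑ B₁ ∈ D₁.powerset, ∑ B₂ ∈ D₂.powerset, f (B₁ ∪ B₂) := by
  induction D₁ using Finset.induction_on with
  | empty => intro D₂ _ f; simp
  | @insert a s ha ih =>
    intro D₂ hd f
    have had : a ∉ D₂ := Finset.disjoint_left.mp hd (Finset.mem_insert_self a s)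
    have hsd : Disjoint s D₂ := hd.mono_left (Finset.subset_insert a s)
    have h1 : (insert a s) ∪ D₂ = insert a (s ∪ D₂) := by
      rw [Finset.insert_union]
    have h2 : a ∉ s ∪ D₂ := by simp [ha, had]
    rw [h1, Finset.sum_powerset_insert h2 f]
    rw [ih D₂ hsd f]
    rw [ih D₂ hsd (fun B => f (insert a B))]
    rw [Finset.sum_powerset_insert ha (fun B₁ => ∑ B₂ ∈ D₂.powerset, f (B₁ ∪ B₂))]
    congr 1
    refine Finset.sum_congr rfl fun B₁ _ => Finset.sum_congr rfl fun B₂ _ => ?_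
    rw [Finset.insert_union]

lemma sum_powerset_map (s : Finset ℕ) (e : ℕ ↪ ℕ) (f : Finset ℕ → M) :
    ∑ B ∈ (s.map e).powerset, f B = ∑ B ∈ s.powerset, f (B.map e) := by
  induction s using Finset.induction_on generalizing f with
  | empty => simp
  | @insert a t ha ih =>
    have hae : e a ∉ t.map e := by simp [ha]
    rw [Finset.map_insert, Finset.sum_powerset_insert hae f, ih f,
      Finset.sum_powerset_insert ha, ih (fun B => f (insert (e a) B))]
    congr 1
    refine Finset.sum_congr rfl fun B _ => ?_
    rw [Finset.map_insert]

lemma neg_one_sum (s : Finset ℕ) :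
    ∑ W ∈ s.powerset, (-1 : ℚ) ^ W.card = if s = ∅ then 1 else 0 := by
  induction s using Finset.induction_on with
  | empty => simp
  | @insert a t ha ih =>
    rw [Finset.sum_powerset_insert ha]
    have : ∑ W ∈ t.powerset, (-1 : ℚ) ^ (insert a W).card
        = ∑ W ∈ t.powerset, (-1 : ℚ) * (-1 : ℚ) ^ W.card := by
      refine Finset.sum_congr rfl fun W hW => ?_
      have haW : a ∉ W := fun hc => ha (Finset.mem_powerset.mp hW hc)
      rw [Finset.card_insert_of_notMem haW, pow_succ]
      ring
    rw [this, ← Finset.mul_sum, ih, if_neg (Finset.insert_ne_empty a t)]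
    split_ifs <;> ring

lemma sum_powerset_sdiff (T : Finset ℕ) (F : Finset ℕ → M) :
    ∑ W ∈ T.powerset, F (T \ W) = ∑ B ∈ T.powerset, F B := by
  refine Finset.sum_nbij' (fun W => T \ W) (fun B => T \ B) ?_ ?_ ?_ ?_ ?_
  · intro W _; exact Finset.mem_powerset.mpr Finset.sdiff_subset
  · intro B _; exact Finset.mem_powerset.mpr Finset.sdiff_subset
  · intro W hW; exact Finset.sdiff_sdiff_eq_self (Finset.mem_powerset.mp hW)
  · intro B hB; exact Finset.sdiff_sdiff_eq_self (Finset.mem_powerset.mp hB)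
  · intro W _; rfl

end Stmt18

namespace Stmt18
open Finset

noncomputable def sing (μ : Multiset ℕ) : AddMonoidAlgebra ℚ (Multiset ℕ) :=
  AddMonoidAlgebra.single μ 1

noncomputable def gF (n : ℕ) (C : Finset ℕ) : AddMonoidAlgebra ℚ (Multiset ℕ) :=
  ∑ B ∈ (Finset.Icc 1 n \ C).powerset, sing (partOf n (C ∪ B))

noncomputable def PP (b : ℕ) : AddMonoidAlgebra ℚ (Multiset ℕ) := gF (b - 1) ∅

lemma gF_empty (n : ℕ) : gF n ∅ = PP (n + 1) := by
  simp [PP]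

lemma betaOf_empty (m : ℕ) : betaOf m ∅ = [m] := by
  simp [betaOf, Finset.sort_empty]

lemma sing_add (μ ν : Multiset ℕ) : sing (μ + ν) = sing μ * sing ν := by
  simp [sing, AddMonoidAlgebra.single_mul_single]

lemma gF_eq : ∀ (k n : ℕ) (C : Finset ℕ), C.card = k → C ⊆ Finset.Icc 1 n →
    gF n C = ((betaOf (n + 1) C).map PP).prod := by
  intro k
  induction k using Nat.strong_induction_on with
  | _ k ih =>
    intro n C hk hC
    rcases Finset.eq_empty_or_nonempty C with rfl | hne
    · rw [gF_empty, betaOf_empty]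
      simp
    · set c := C.max' hne with hc
      have hcC : c ∈ C := C.max'_mem hne
      have hc1 : 1 ≤ c := by have := hC hcC; simp at this; omega
      have hcn : c ≤ n := by have := hC hcC; simp at this; omega
      set C₀ := C.erase c with hC₀
      have hC₀lt : ∀ x ∈ C₀, x < c := by
        intro x hx
        have hxc : x ≠ c := (Finset.mem_erase.mp hx).1
        have := C.le_max' x (Finset.mem_erase.mp hx).2
        omega
      have hC₀sub : C₀ ⊆ Finset.Icc 1 (c - 1) := by
        intro x hx
        have h1 := hC (Finset.mem_erase.mp hx).2
        have h2 := hC₀lt x hx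
        simp at h1 ⊢
        omega
      have hCeq : C = insert c C₀ := (Finset.insert_erase hcC).symm
      -- the beta decomposition
      have hbeta : betaOf (n + 1) C = betaOf c C₀ ++ [n + 1 - c] := by
        rw [hCeq]; exact beta_insert_max (n + 1) c C₀ hC₀lt
      -- the sdiff decomposition
      have hD : Finset.Icc 1 n \ C
          = (Finset.Icc 1 (c - 1) \ C₀) ∪ ((Finset.Icc 1 (n - c)).map (shiftE c)) := by
        ext x
        simp only [Finset.mem_sdiff, Finset.mem_Icc, Finset.mem_union, Finset.mem_map,
          shiftE, Function.Embedding.coeFn_mk]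
        constructor
        · rintro ⟨⟨hx1, hxn⟩, hxC⟩
          have hxc : x ≠ c := fun h => hxC (h ▸ hcC)
          rcases lt_or_gt_of_ne hxc with hlt | hgt
          · left
            refine ⟨⟨hx1, by omega⟩, fun hx0 => hxC (Finset.mem_of_mem_erase hx0)⟩
          · right
            exact ⟨x - c, ⟨by omega, by omega⟩, by omega⟩
        · rintro (⟨⟨hx1, hxc⟩, hxC₀⟩ | ⟨y, ⟨hy1, hy2⟩, rfl⟩)
          · refine ⟨⟨hx1, by omega⟩, fun hxC => hxC₀ ?_⟩
            exact Finset.mem_erase.mpr ⟨by omega, hxC⟩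
          · refine ⟨⟨by omega, by omega⟩, fun hxC => ?_⟩
            have := C.le_max' _ hxC
            omega
      have hdisj : Disjoint (Finset.Icc 1 (c - 1) \ C₀) ((Finset.Icc 1 (n - c)).map (shiftE c)) := by
        rw [Finset.disjoint_left]
        intro x hx hx2
        simp only [Finset.mem_sdiff, Finset.mem_Icc] at hx
        simp only [Finset.mem_map, Finset.mem_Icc, shiftE, Function.Embedding.coeFn_mk] at hx2
        obtain ⟨y, ⟨hy1, _⟩, rfl⟩ := hx2
        omega
      -- main sum computation
      have key : gF n C = gF (c - 1) C₀ * PP (n + 1 - c) := by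
        rw [gF, hD, sum_powerset_union' _ _ hdisj, PP]
        have h1c : n + 1 - c - 1 = n - c := by omega
        rw [h1c, gF, gF]
        rw [Finset.sum_mul_sum]
        refine Finset.sum_congr rfl fun B₁ hB₁ => ?_
        rw [sum_powerset_map]
        refine Finset.sum_congr rfl fun B₂ hB₂ => ?_
        have hB₁sub : B₁ ⊆ Finset.Icc 1 (c - 1) \ C₀ := Finset.mem_powerset.mp hB₁
        have hB₂sub : B₂ ⊆ Finset.Icc 1 (n - c) := by
          simpa using Finset.mem_powerset.mp hB₂
        have hset : C ∪ (B₁ ∪ B₂.map (shiftE c))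
            = (C₀ ∪ B₁) ∪ insert c (B₂.map (shiftE c)) := by
          rw [hCeq]; ext x
          simp only [Finset.mem_union, Finset.mem_insert]
          tauto
        rw [hset, Finset.empty_union, ← sing_add]
        congr 1
        have hA₁ : ∀ x ∈ C₀ ∪ B₁, x < c := by
          intro x hx
          rcases Finset.mem_union.mp hx with hx | hx
          · exact hC₀lt x hx
          · have := hB₁sub hx
            simp only [Finset.mem_sdiff, Finset.mem_Icc] at this
            omega
        have hA₂ : ∀ x ∈ B₂, 1 ≤ x := by
          intro x hx
          have := hB₂sub hx
          simp only [Finset.mem_Icc] at this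
          omega
        have hsplit := beta_split c (n + 1 - c) (C₀ ∪ B₁) B₂ hA₁ hA₂
        have hcd : c + (n + 1 - c) = n + 1 := by omega
        rw [hcd] at hsplit
        show partOf n ((C₀ ∪ B₁) ∪ insert c (B₂.map (shiftE c)))
          = partOf (c - 1) (C₀ ∪ B₁) + partOf (n - c) B₂
        rw [partOf, hsplit]
        have e1 : c - 1 + 1 = c := by omega
        have e2 : n - c + 1 = n + 1 - c := by omega
        rw [partOf, partOf, e1, e2]
        push_cast [Multiset.coe_add]
        rfl
      rw [key]
      have hcard : C₀.card < k := by
        rw [← hk, hC₀]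
        exact Finset.card_erase_lt_of_mem hcC
      rw [ih C₀.card hcard (c - 1) C₀ rfl hC₀sub, hbeta]
      have e : c - 1 + 1 = c := by omega
      rw [e, List.map_append, List.prod_append]
      simp

end Stmt18

namespace Stmt18
open Finset

lemma gF_congr {n : ℕ} {C C' : Finset ℕ} (hC : C ⊆ Finset.Icc 1 n) (hC' : C' ⊆ Finset.Icc 1 n)
    (hP : partOf n C = partOf n C') : gF n C = gF n C' := by
  rw [gF_eq C.card n C rfl hC, gF_eq C'.card n C' rfl hC']
  have hperm : List.Perm (betaOf (n + 1) C) (betaOf (n + 1) C') := Multiset.coe_eq_coe.mp hP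
  exact (hperm.map PP).prod_eq

noncomputable def evalAt (φ : Multiset ℕ → ℚ) : AddMonoidAlgebra ℚ (Multiset ℕ) →+ ℚ :=
  (Finsupp.liftAddHom (fun μ => AddMonoidHom.mulRight (φ μ))).comp
    AddMonoidAlgebra.coeffAddEquiv.toAddMonoidHom

lemma evalAt_sing (φ : Multiset ℕ → ℚ) (μ : Multiset ℕ) : evalAt φ (sing μ) = φ μ := by
  show Finsupp.liftAddHom (fun μ => AddMonoidHom.mulRight (φ μ)) (Finsupp.single μ 1) = φ μ
  rw [Finsupp.liftAddHom_apply_single]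
  simp

lemma sum_core {n : ℕ} (φ : Multiset ℕ → ℚ) {C C' : Finset ℕ}
    (hC : C ⊆ Finset.Icc 1 n) (hC' : C' ⊆ Finset.Icc 1 n)
    (hP : partOf n C = partOf n C') :
    ∑ B ∈ (Finset.Icc 1 n \ C).powerset, φ (partOf n (C ∪ B))
      = ∑ B ∈ (Finset.Icc 1 n \ C').powerset, φ (partOf n (C' ∪ B)) := by
  have h := congrArg (evalAt φ) (gF_congr hC hC' hP)
  rw [gF, gF, map_sum, map_sum] at h
  simpa only [evalAt_sing] using h

end Stmt18

namespace Stmt18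
open Finset

lemma inv1 (n : ℕ) (h : Finset ℕ → ℚ) (T : Finset ℕ) (hT : T ⊆ Finset.Icc 1 n) :
    ∑ W ∈ T.powerset, (-1 : ℚ) ^ W.card * (∑ S ∈ (Finset.Icc 1 n \ W).powerset, h S)
      = ∑ S ∈ (Finset.Icc 1 n).powerset.filter (fun S => T ⊆ S), h S := by
  set U := Finset.Icc 1 n with hU
  have e1 : ∀ W : Finset ℕ, (U \ W).powerset = U.powerset.filter (· ⊆ U \ W) := by
    intro W; ext S
    simp only [Finset.mem_powerset, Finset.mem_filter]
    exact ⟨fun hs => ⟨hs.trans Finset.sdiff_subset, hs⟩, fun hs => hs.2⟩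
  calc ∑ W ∈ T.powerset, (-1 : ℚ) ^ W.card * (∑ S ∈ (U \ W).powerset, h S)
      = ∑ W ∈ T.powerset, ∑ S ∈ U.powerset, (if S ⊆ U \ W then (-1 : ℚ) ^ W.card * h S else 0) := by
        refine Finset.sum_congr rfl fun W _ => ?_
        rw [Finset.mul_sum, e1 W, Finset.sum_filter]
    _ = ∑ S ∈ U.powerset, ∑ W ∈ T.powerset, (if S ⊆ U \ W then (-1 : ℚ) ^ W.card * h S else 0) :=
        Finset.sum_comm
    _ = ∑ S ∈ U.powerset, (if T ⊆ S then h S else 0) := by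
        refine Finset.sum_congr rfl fun S hS => ?_
        have hSU : S ⊆ U := Finset.mem_powerset.mp hS
        have hiff : ∀ W ∈ T.powerset, (S ⊆ U \ W ↔ W ⊆ T \ S) := by
          intro W hW
          have hWT : W ⊆ T := Finset.mem_powerset.mp hW
          rw [Finset.subset_sdiff, Finset.subset_sdiff]
          constructor
          · rintro ⟨_, hd⟩; exact ⟨hWT, hd.symm⟩
          · rintro ⟨_, hd⟩; exact ⟨hSU, hd.symm⟩
        calc ∑ W ∈ T.powerset, (if S ⊆ U \ W then (-1 : ℚ) ^ W.card * h S else 0)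
            = ∑ W ∈ T.powerset, (if W ⊆ T \ S then (-1 : ℚ) ^ W.card * h S else 0) :=
              Finset.sum_congr rfl fun W hW => by simp only [hiff W hW]
          _ = ∑ W ∈ T.powerset.filter (· ⊆ T \ S), (-1 : ℚ) ^ W.card * h S :=
              (Finset.sum_filter _ _).symm
          _ = ∑ W ∈ (T \ S).powerset, (-1 : ℚ) ^ W.card * h S := by
              congr 1
              ext W
              simp only [Finset.mem_filter, Finset.mem_powerset]
              exact ⟨fun hw => hw.2, fun hw => ⟨hw.trans Finset.sdiff_subset, hw⟩⟩
          _ = (∑ W ∈ (T \ S).powerset, (-1 : ℚ) ^ W.card) * h S := by rw [Finset.sum_mul]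
          _ = (if T \ S = ∅ then (1 : ℚ) else 0) * h S := by rw [neg_one_sum]
          _ = if T ⊆ S then h S else 0 := by
              simp only [Finset.sdiff_eq_empty_iff_subset]; split_ifs <;> ring
    _ = ∑ S ∈ U.powerset.filter (fun S => T ⊆ S), h S := (Finset.sum_filter _ _).symm

lemma inv2 (n : ℕ) (h : Finset ℕ → ℚ) (T : Finset ℕ) (hT : T ⊆ Finset.Icc 1 n) :
    ∑ W ∈ (Finset.Icc 1 n \ T).powerset,
        (-1 : ℚ) ^ W.card * (∑ S ∈ (Finset.Icc 1 n).powerset.filter (fun S => W ⊆ S), h S)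
      = ∑ S ∈ T.powerset, h S := by
  set U := Finset.Icc 1 n with hU
  calc ∑ W ∈ (U \ T).powerset, (-1 : ℚ) ^ W.card * (∑ S ∈ U.powerset.filter (fun S => W ⊆ S), h S)
      = ∑ W ∈ (U \ T).powerset, ∑ S ∈ U.powerset, (if W ⊆ S then (-1 : ℚ) ^ W.card * h S else 0) := by
        refine Finset.sum_congr rfl fun W _ => ?_
        rw [Finset.mul_sum, Finset.sum_filter]
    _ = ∑ S ∈ U.powerset, ∑ W ∈ (U \ T).powerset, (if W ⊆ S then (-1 : ℚ) ^ W.card * h S else 0) :=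
        Finset.sum_comm
    _ = ∑ S ∈ U.powerset, (if S ⊆ T then h S else 0) := by
        refine Finset.sum_congr rfl fun S hS => ?_
        have hSU : S ⊆ U := Finset.mem_powerset.mp hS
        calc ∑ W ∈ (U \ T).powerset, (if W ⊆ S then (-1 : ℚ) ^ W.card * h S else 0)
            = ∑ W ∈ (U \ T).powerset.filter (· ⊆ S), (-1 : ℚ) ^ W.card * h S :=
              (Finset.sum_filter _ _).symm
          _ = ∑ W ∈ (S \ T).powerset, (-1 : ℚ) ^ W.card * h S := by
              congr 1
              ext W
              simp only [Finset.mem_filter, Finset.mem_powerset, Finset.subset_sdiff]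
              constructor
              · rintro ⟨⟨_, hd⟩, hWS⟩; exact ⟨hWS, hd⟩
              · rintro ⟨hWS, hd⟩; exact ⟨⟨hWS.trans hSU, hd⟩, hWS⟩
          _ = (∑ W ∈ (S \ T).powerset, (-1 : ℚ) ^ W.card) * h S := by rw [Finset.sum_mul]
          _ = (if S \ T = ∅ then (1 : ℚ) else 0) * h S := by rw [neg_one_sum]
          _ = if S ⊆ T then h S else 0 := by
              simp only [Finset.sdiff_eq_empty_iff_subset]; split_ifs <;> ring
    _ = ∑ S ∈ U.powerset.filter (· ⊆ T), h S := (Finset.sum_filter _ _).symm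
    _ = ∑ S ∈ T.powerset, h S := by
        congr 1
        ext S
        simp only [Finset.mem_filter, Finset.mem_powerset]
        exact ⟨fun hs => hs.2, fun hs => ⟨hs.trans hT, hs⟩⟩

lemma reflect (n : ℕ) (P : Finset ℕ) (hP : P ⊆ Finset.Icc 1 n) (φ : Multiset ℕ → ℚ) :
    ∑ W ∈ P.powerset, φ (partOf n (Finset.Icc 1 n \ W))
      = ∑ B ∈ P.powerset, φ (partOf n ((Finset.Icc 1 n \ P) ∪ B)) := by
  rw [← sum_powerset_sdiff P (fun W => φ (partOf n (Finset.Icc 1 n \ W)))]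
  refine Finset.sum_congr rfl fun B hB => ?_
  have hBP : B ⊆ P := Finset.mem_powerset.mp hB
  congr 2
  ext x
  simp only [Finset.mem_sdiff, Finset.mem_union]
  constructor
  · rintro ⟨hxU, hx⟩
    by_cases hxP : x ∈ P
    · right
      by_contra hxB
      exact hx ⟨hxP, hxB⟩
    · exact Or.inl ⟨hxU, hxP⟩
  · rintro (⟨hxU, hxP⟩ | hxB)
    · exact ⟨hxU, fun hc => hxP hc.1⟩
    · exact ⟨hP (hBP hxB), fun hc => hc.2 hxB⟩

end Stmt18

namespace Stmt18
open Finset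

lemma sign_eq {n : ℕ} {W : Finset ℕ} (hW : W ⊆ Finset.Icc 1 n) :
    (-1 : ℚ) ^ W.card = (-1 : ℚ) ^ (n + 1 - Multiset.card (partOf n (Finset.Icc 1 n \ W))) := by
  have hcardU : (Finset.Icc 1 n).card = n := by rw [Nat.card_Icc]; omega
  have h1 : (Finset.Icc 1 n \ W).card = n - W.card := by
    rw [Finset.card_sdiff_of_subset hW, hcardU]
  have h2 : W.card ≤ n := by
    have := Finset.card_le_card hW; omega
  rw [partOf_card, h1]
  congr 1
  omega

end Stmt18

/-- A function `h` assigning a rational number `h_S` to each subset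
`S ⊆ [n]` defines a *symmetric* quasisymmetric function `Σ_S h_S F_{β(S)}` — i.e.
`Σ_{S ⊆ T} h_S` depends only on the partition `λ(β(T))` — iff the multicollection
`{S^{h_S}}` is *fully balanced*: for every partition `λ` of `n+1` there is a constant
`κ_λ` with `Σ_{S ⊇ T} h_S = κ_λ` for all `T ∈ F_λ` (where `T ∈ F_λ` iff the complement
of `T` in `[n]` has `λ(β([n]∖T)) = λ`, equivalently `T` has profile `λ₁−1, …, λₖ−1`). -/
theorem symmetric_iff_fully_balanced (n : ℕ) (h : Finset ℕ → ℚ) :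
    (∀ T T' : Finset ℕ, T ⊆ Finset.Icc 1 n → T' ⊆ Finset.Icc 1 n →
        partOf n T = partOf n T' →
        ∑ S ∈ T.powerset, h S = ∑ S ∈ T'.powerset, h S) ↔
    (∀ lam : Multiset ℕ, 0 ∉ lam → lam.sum = n + 1 → ∃ κ : ℚ,
        ∀ T ⊆ Finset.Icc 1 n, partOf n (Finset.Icc 1 n \ T) = lam →
          ∑ S ∈ (Finset.Icc 1 n).powerset.filter (fun S => T ⊆ S), h S = κ) := by
  classical
  constructor
  · -- symmetric → fully balanced
    intro hsym lam h0 hsum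
    by_cases hex : ∃ T, T ⊆ Finset.Icc 1 n ∧ partOf n (Finset.Icc 1 n \ T) = lam
    · obtain ⟨T₀, hT₀, hP₀⟩ := hex
      refine ⟨∑ S ∈ (Finset.Icc 1 n).powerset.filter (fun S => T₀ ⊆ S), h S, ?_⟩
      intro T hT hPT
      set u : Multiset ℕ → ℚ := fun μ =>
        if hμ : ∃ A, A ⊆ Finset.Icc 1 n ∧ partOf n A = μ
        then ∑ S ∈ hμ.choose.powerset, h S else 0 with hu_def
      have hu : ∀ A, A ⊆ Finset.Icc 1 n → ∑ S ∈ A.powerset, h S = u (partOf n A) := by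
        intro A hA
        have hex' : ∃ A', A' ⊆ Finset.Icc 1 n ∧ partOf n A' = partOf n A := ⟨A, hA, rfl⟩
        simp only [hu_def]
        rw [dif_pos hex']
        exact (hsym hex'.choose A hex'.choose_spec.1 hA hex'.choose_spec.2).symm
      set φ : Multiset ℕ → ℚ := fun μ => (-1 : ℚ) ^ (n + 1 - Multiset.card μ) * u μ with hφ
      have key : ∀ T₁, T₁ ⊆ Finset.Icc 1 n →
          ∑ S ∈ (Finset.Icc 1 n).powerset.filter (fun S => T₁ ⊆ S), h S
            = ∑ B ∈ (Finset.Icc 1 n \ (Finset.Icc 1 n \ T₁)).powerset,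
                φ (partOf n ((Finset.Icc 1 n \ T₁) ∪ B)) := by
        intro T₁ hT₁
        calc ∑ S ∈ (Finset.Icc 1 n).powerset.filter (fun S => T₁ ⊆ S), h S
            = ∑ W ∈ T₁.powerset,
                (-1 : ℚ) ^ W.card * (∑ S ∈ (Finset.Icc 1 n \ W).powerset, h S) :=
              (Stmt18.inv1 n h T₁ hT₁).symm
          _ = ∑ W ∈ T₁.powerset, φ (partOf n (Finset.Icc 1 n \ W)) := by
              refine Finset.sum_congr rfl fun W hW => ?_
              have hWU : W ⊆ Finset.Icc 1 n := (Finset.mem_powerset.mp hW).trans hT₁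
              rw [hu _ Finset.sdiff_subset]
              simp only [hφ]
              rw [Stmt18.sign_eq hWU]
          _ = ∑ B ∈ T₁.powerset, φ (partOf n ((Finset.Icc 1 n \ T₁) ∪ B)) :=
              Stmt18.reflect n T₁ hT₁ φ
          _ = ∑ B ∈ (Finset.Icc 1 n \ (Finset.Icc 1 n \ T₁)).powerset,
                φ (partOf n ((Finset.Icc 1 n \ T₁) ∪ B)) := by
              rw [Finset.sdiff_sdiff_eq_self hT₁]
      rw [key T hT, key T₀ hT₀]
      exact Stmt18.sum_core φ Finset.sdiff_subset Finset.sdiff_subset (hPT.trans hP₀.symm)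
    · exact ⟨0, fun T hT hPT => absurd ⟨T, hT, hPT⟩ hex⟩
  · -- fully balanced → symmetric
    intro hbal T T' hT hT' hPP
    set w : Multiset ℕ → ℚ := fun μ =>
      if hμ : 0 ∉ μ ∧ μ.sum = n + 1 then (hbal μ hμ.1 hμ.2).choose else 0 with hw_def
    have hw : ∀ A, A ⊆ Finset.Icc 1 n →
        ∑ S ∈ (Finset.Icc 1 n).powerset.filter (fun S => A ⊆ S), h S
          = w (partOf n (Finset.Icc 1 n \ A)) := by
      intro A hA
      have hvalid : (0 : ℕ) ∉ partOf n (Finset.Icc 1 n \ A) ∧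
          (partOf n (Finset.Icc 1 n \ A)).sum = n + 1 :=
        ⟨Stmt18.partOf_zero_not_mem Finset.sdiff_subset, Stmt18.partOf_sum Finset.sdiff_subset⟩
      simp only [hw_def]
      rw [dif_pos hvalid]
      exact (hbal _ hvalid.1 hvalid.2).choose_spec A hA rfl
    set φ : Multiset ℕ → ℚ := fun μ => (-1 : ℚ) ^ (n + 1 - Multiset.card μ) * w μ with hφ
    have key : ∀ T₁, T₁ ⊆ Finset.Icc 1 n →
        ∑ S ∈ T₁.powerset, h S
          = ∑ B ∈ (Finset.Icc 1 n \ T₁).powerset, φ (partOf n (T₁ ∪ B)) := by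
      intro T₁ hT₁
      calc ∑ S ∈ T₁.powerset, h S
          = ∑ W ∈ (Finset.Icc 1 n \ T₁).powerset, (-1 : ℚ) ^ W.card *
              (∑ S ∈ (Finset.Icc 1 n).powerset.filter (fun S => W ⊆ S), h S) :=
            (Stmt18.inv2 n h T₁ hT₁).symm
        _ = ∑ W ∈ (Finset.Icc 1 n \ T₁).powerset, φ (partOf n (Finset.Icc 1 n \ W)) := by
            refine Finset.sum_congr rfl fun W hW => ?_
            have hWU : W ⊆ Finset.Icc 1 n :=
              (Finset.mem_powerset.mp hW).trans Finset.sdiff_subset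
            rw [hw _ hWU]
            simp only [hφ]
            rw [Stmt18.sign_eq hWU]
        _ = ∑ B ∈ (Finset.Icc 1 n \ T₁).powerset,
              φ (partOf n ((Finset.Icc 1 n \ (Finset.Icc 1 n \ T₁)) ∪ B)) :=
            Stmt18.reflect n (Finset.Icc 1 n \ T₁) Finset.sdiff_subset φ
        _ = ∑ B ∈ (Finset.Icc 1 n \ T₁).powerset, φ (partOf n (T₁ ∪ B)) := by
            rw [Finset.sdiff_sdiff_eq_self hT₁]
    rw [key T hT, key T' hT']
    exact Stmt18.sum_core φ hT hT' hPP
end
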